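/- arXiv:2310.14238 — 8 statements merged into one kernel-verified Lean document; each statement's English description precedes it below -/
import Mathlib

section
/- Let n be a positive integer and Q1, Q2, Q3 be polynomials in R[x,y,z] such that Q1·x^n + Q2·y^n + Q3·z^n = 0 identically. Then there exist polynomials A, B, C in R[x,y,z] such that Q1 = A·y^n + B·z^n, Q2 = -A·x^n + C·z^n, and Q3 = -B·x^n - C·y^n. -/
/-! Membership in a monomial ideal is decided monomial by monomial, so multiplying by a power of a
variable that occurs in none of the generators cannot move a polynomial into the ideal. Hence
`Q₁ * x ^ a ∈ (y ^ b, z ^ c)` gives `Q₁ = A * y ^ b + B * z ^ c`; substituting this leaves a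
relation between `y ^ b` and `z ^ c` alone, which the same argument solves. -/

open MvPolynomial

theorem Finsupp.le_of_le_add_of_disjoint {σ : Type*} {s d t : σ →₀ ℕ} (hle : s ≤ d + t)
    (hst : Disjoint s.support t.support) : s ≤ d := by
  intro x
  by_cases hx : x ∈ s.support
  · simpa [Finsupp.notMem_support_iff.mp (Finset.disjoint_left.mp hst hx)] using hle x
  · simp [Finsupp.notMem_support_iff.mp hx]

theorem Finsupp.disjoint_support_single_single {σ : Type*} {i j : σ} (hij : i ≠ j) (a b : ℕ) :
    Disjoint (Finsupp.single i a).support (Finsupp.single j b).support :=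
  (Finset.disjoint_singleton.mpr hij).mono Finsupp.support_single_subset
    Finsupp.support_single_subset

namespace MvPolynomial

variable {σ R : Type*}

theorem mem_ideal_span_monomial_image_of_mul_monomial_mem [CommSemiring R]
    {S : Set (σ →₀ ℕ)} {t : σ →₀ ℕ} {P : MvPolynomial σ R}
    (hS : ∀ s ∈ S, Disjoint s.support t.support)
    (hP : P * monomial t 1 ∈ Ideal.span ((fun s => monomial s (1 : R)) '' S)) :
    P ∈ Ideal.span ((fun s => monomial s (1 : R)) '' S) := by
  rw [mem_ideal_span_monomial_image] at hP ⊢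
  intro d hd
  have hdt : d + t ∈ (P * monomial t 1).support := by
    rwa [mem_support_iff, coeff_mul_monomial, mul_one, ← mem_support_iff]
  obtain ⟨s, hs, hle⟩ := hP _ hdt
  exact ⟨s, hs, Finsupp.le_of_le_add_of_disjoint hle (hS s hs)⟩

variable [CommRing R] {i j k : σ} {a b c : ℕ}

theorem exists_eq_of_mul_X_pow_add_mul_X_pow_eq_zero (hij : i ≠ j) {P Q : MvPolynomial σ R}
    (h : P * X i ^ a + Q * X j ^ b = 0) :
    ∃ C, P = C * X j ^ b ∧ Q = -C * X i ^ a := by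
  have hmem : P * monomial (Finsupp.single i a) 1 ∈
      Ideal.span ((fun s => monomial s (1 : R)) '' {Finsupp.single j b}) := by
    rw [Set.image_singleton, ← X_pow_eq_monomial, ← X_pow_eq_monomial, Ideal.mem_span_singleton,
      eq_neg_of_add_eq_zero_left h]
    exact (dvd_mul_left _ _).neg_right
  obtain ⟨C, hC⟩ : X j ^ b ∣ P := by
    have := mem_ideal_span_monomial_image_of_mul_monomial_mem
      (by simpa using Finsupp.disjoint_support_single_single hij.symm b a) hmem
    rwa [Set.image_singleton, ← X_pow_eq_monomial, Ideal.mem_span_singleton] at this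
  refine ⟨C, by rw [hC, mul_comm], (isRegular_X_pow (n := j) b).right ?_⟩
  show Q * X j ^ b = -C * X i ^ a * X j ^ b
  linear_combination h - X i ^ a * hC

theorem exists_eq_of_mul_X_pow_add_mul_X_pow_add_mul_X_pow_eq_zero (hij : i ≠ j) (hik : i ≠ k)
    (hjk : j ≠ k) {Q₁ Q₂ Q₃ : MvPolynomial σ R}
    (h : Q₁ * X i ^ a + Q₂ * X j ^ b + Q₃ * X k ^ c = 0) :
    ∃ A B C, Q₁ = A * X j ^ b + B * X k ^ c ∧ Q₂ = -A * X i ^ a + C * X k ^ c ∧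
      Q₃ = -B * X i ^ a - C * X j ^ b := by
  have hmem : Q₁ * monomial (Finsupp.single i a) 1 ∈ Ideal.span
      ((fun s => monomial s (1 : R)) '' {Finsupp.single j b, Finsupp.single k c}) := by
    rw [Set.image_pair, ← X_pow_eq_monomial, ← X_pow_eq_monomial, ← X_pow_eq_monomial,
      Ideal.mem_span_pair]
    exact ⟨-Q₂, -Q₃, by linear_combination -h⟩
  obtain ⟨A, B, hAB⟩ : ∃ A B, A * X j ^ b + B * X k ^ c = Q₁ := by
    have := mem_ideal_span_monomial_image_of_mul_monomial_mem (by
      rintro s (rfl | rfl)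
      exacts [Finsupp.disjoint_support_single_single hij.symm b a,
        Finsupp.disjoint_support_single_single hik.symm c a]) hmem
    rwa [Set.image_pair, ← X_pow_eq_monomial, ← X_pow_eq_monomial, Ideal.mem_span_pair] at this
  obtain ⟨C, hC₂, hC₃⟩ := exists_eq_of_mul_X_pow_add_mul_X_pow_eq_zero (a := b) (b := c) hjk
    (P := Q₂ + A * X i ^ a) (Q := Q₃ + B * X i ^ a) (by linear_combination h + X i ^ a * hAB)
  exact ⟨A, B, C, hAB.symm, by linear_combination hC₂, by linear_combination hC₃⟩

end MvPolynomial

theorem stmt_0_general (n : ℕ) (Q1 Q2 Q3 : MvPolynomial (Fin 3) ℝ)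
    (h : Q1 * (X 0) ^ n + Q2 * (X 1) ^ n + Q3 * (X 2) ^ n = 0) :
    ∃ A B C : MvPolynomial (Fin 3) ℝ,
      Q1 = A * (X 1) ^ n + B * (X 2) ^ n ∧
      Q2 = -A * (X 0) ^ n + C * (X 2) ^ n ∧
      Q3 = -B * (X 0) ^ n - C * (X 1) ^ n :=
  exists_eq_of_mul_X_pow_add_mul_X_pow_add_mul_X_pow_eq_zero (by decide) (by decide) (by decide) h

theorem stmt_0 (n : ℕ) (hn : 0 < n) (Q1 Q2 Q3 : MvPolynomial (Fin 3) ℝ)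
    (h : Q1 * (X 0) ^ n + Q2 * (X 1) ^ n + Q3 * (X 2) ^ n = 0) :
    ∃ A B C : MvPolynomial (Fin 3) ℝ,
      Q1 = A * (X 1) ^ n + B * (X 2) ^ n ∧
      Q2 = -A * (X 0) ^ n + C * (X 2) ^ n ∧
      Q3 = -B * (X 0) ^ n - C * (X 1) ^ n :=
  stmt_0_general n Q1 Q2 Q3 h
end

section
/- Let X = (P,Q,R) be a cubic polynomial vector field in R³ such that 2(Px+Qy+Rz) = K·(x²+y²+z²-1) for some polynomial K. Then there exist polynomials f, g, h of degree at most 1 and polynomials A, B, C of degree at most 2 with zero constant term such that P = (1-x²-y²-z²)f + Ay + Bz, Q = (1-x²-y²-z²)g - Ax + Cz, and R = (1-x²-y²-z²)h - Bx - Cy. -/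
/-!
Write `D = x² + y² + z² - 1`. Evaluating `2(Px + Qy + Rz) = K D` at the origin gives `K(0) = 0`,
and comparing degrees gives `deg K ≤ 2`, so `K / 2 = x f + y g + z h` with `f, g, h` of degree
at most one. Then `(P - D f, Q - D g, R - D h)` is a syzygy of `(x, y, z)`; by exactness of the
Koszul complex it equals `(A y + B z, -A x + C z, -B x - C y)`, which is seen by setting the
variables to zero one at a time. Finally, replacing `A` by `A + A(0) D` (and likewise `B`, `C`)
removes the constant terms at the cost of a linear correction of `f, g, h`.
-/

open MvPolynomial

namespace MvPolynomial

variable {σ τ R : Type*} [CommRing R]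

theorem totalDegree_aeval_le_of_totalDegree_le_one {f : σ → MvPolynomial τ R}
    (hf : ∀ j, (f j).totalDegree ≤ 1) (p : MvPolynomial σ R) :
    (aeval f p).totalDegree ≤ p.totalDegree := by
  conv_lhs => rw [p.as_sum, map_sum]
  refine totalDegree_finsetSum_le fun d hd => ?_
  rw [aeval_monomial, algebraMap_eq]
  refine (totalDegree_mul _ _).trans ?_
  rw [totalDegree_C, zero_add]
  refine (totalDegree_finsetProd _ _).trans
    ((Finset.sum_le_sum fun j _ => ?_).trans (le_totalDegree hd))
  exact (totalDegree_pow _ _).trans (by simpa using Nat.mul_le_mul_left (d j) (hf j))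

theorem totalDegree_X_le (i : σ) : (X i : MvPolynomial σ R).totalDegree ≤ 1 := by
  simpa [X] using totalDegree_monomial_le (Finsupp.single i 1) (1 : R)

section SubstXZero

variable [DecidableEq σ]

noncomputable def substXZero (i : σ) : MvPolynomial σ R →ₐ[R] MvPolynomial σ R :=
  aeval (Function.update X i 0)

@[simp]
theorem substXZero_X_self (i : σ) : substXZero i (X i : MvPolynomial σ R) = 0 := by
  simp [substXZero]

@[simp]
theorem substXZero_X_of_ne {i j : σ} (h : j ≠ i) :
    substXZero i (X j : MvPolynomial σ R) = X j := by
  simp [substXZero, h]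

theorem X_dvd_sub_substXZero (i : σ) (p : MvPolynomial σ R) : X i ∣ p - substXZero i p := by
  induction p using MvPolynomial.induction_on with
  | C a => simp [substXZero]
  | add p q hp hq => simpa only [map_add, add_sub_add_comm] using dvd_add hp hq
  | mul_X p j hp =>
    rcases eq_or_ne j i with rfl | hj
    · simp
    · simpa [hj, ← sub_mul] using hp.mul_right (X j)

theorem X_dvd_iff_substXZero_eq_zero {i : σ} {p : MvPolynomial σ R} :
    X i ∣ p ↔ substXZero i p = 0 := by
  constructor
  · rintro ⟨q, rfl⟩
    simp
  · intro h
    simpa [h] using X_dvd_sub_substXZero i p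

theorem totalDegree_substXZero_le (i : σ) (p : MvPolynomial σ R) :
    (substXZero i p).totalDegree ≤ p.totalDegree :=
  totalDegree_aeval_le_of_totalDegree_le_one (fun j => by
    rcases eq_or_ne j i with rfl | hj
    · simp
    · simpa [hj] using totalDegree_X_le j) p

end SubstXZero

theorem totalDegree_le_of_X_mul_le [IsDomain R] {i : σ} {p : MvPolynomial σ R} {n : ℕ}
    (h : (X i * p).totalDegree ≤ n + 1) : p.totalDegree ≤ n := by
  rcases eq_or_ne p 0 with rfl | hp
  · simp
  · rw [totalDegree_mul_of_isDomain (X_ne_zero i) hp, totalDegree_X] at h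
    omega

theorem substXZero_substXZero_substXZero (p : MvPolynomial (Fin 3) R) :
    substXZero 2 (substXZero 1 (substXZero 0 p)) = C (constantCoeff p) := by
  induction p using MvPolynomial.induction_on with
  | C a => simp [substXZero]
  | add p q hp hq => simp [hp, hq]
  | mul_X p j hp => fin_cases j <;> simp [hp]

theorem totalDegree_mul_X_add_mul_X_add_mul_X_le {n : ℕ} {p q r : MvPolynomial (Fin 3) R}
    (hp : p.totalDegree ≤ n) (hq : q.totalDegree ≤ n) (hr : r.totalDegree ≤ n) :
    (p * X 0 + q * X 1 + r * X 2).totalDegree ≤ n + 1 := by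
  have hmul {u : MvPolynomial (Fin 3) R} (hu : u.totalDegree ≤ n) (i : Fin 3) :
      (u * X i).totalDegree ≤ n + 1 :=
    (totalDegree_mul _ _).trans (add_le_add hu (totalDegree_X_le i))
  exact (totalDegree_add _ _).trans
    (max_le ((totalDegree_add _ _).trans (max_le (hmul hp 0) (hmul hq 1))) (hmul hr 2))

section ThreeVariables

variable [IsDomain R]

theorem exists_eq_X_mul_add_X_mul_add_X_mul {n : ℕ} {p : MvPolynomial (Fin 3) R}
    (hp : p.totalDegree ≤ n + 1) (hp0 : constantCoeff p = 0) :
    ∃ f g h : MvPolynomial (Fin 3) R, f.totalDegree ≤ n ∧ g.totalDegree ≤ n ∧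
      h.totalDegree ≤ n ∧ p = X 0 * f + X 1 * g + X 2 * h := by
  have hp₁ := (totalDegree_substXZero_le 0 p).trans hp
  have hp₂ := (totalDegree_substXZero_le 1 _).trans hp₁
  obtain ⟨f, hf⟩ := X_dvd_sub_substXZero 0 p
  obtain ⟨g, hg⟩ := X_dvd_sub_substXZero 1 (substXZero 0 p)
  obtain ⟨h, hh⟩ := X_dvd_iff_substXZero_eq_zero.2
    ((substXZero_substXZero_substXZero p).trans (by rw [hp0, map_zero]))
  refine ⟨f, g, h, totalDegree_le_of_X_mul_le (i := 0) ?_,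
    totalDegree_le_of_X_mul_le (i := 1) ?_, totalDegree_le_of_X_mul_le (hh ▸ hp₂),
    by linear_combination hf + hg + hh⟩
  · exact hf ▸ (totalDegree_sub _ _).trans (max_le hp hp₁)
  · exact hg ▸ (totalDegree_sub _ _).trans (max_le hp₁ hp₂)

theorem exists_eq_koszul_of_syzygy {n : ℕ} {p q r : MvPolynomial (Fin 3) R}
    (hq : q.totalDegree ≤ n + 1) (hr : r.totalDegree ≤ n + 1)
    (h : p * X 0 + q * X 1 + r * X 2 = 0) :
    ∃ a b c : MvPolynomial (Fin 3) R, a.totalDegree ≤ n ∧ b.totalDegree ≤ n ∧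
      c.totalDegree ≤ n ∧ p = a * X 1 + b * X 2 ∧ q = -(a * X 0) + c * X 2 ∧
      r = -(b * X 0) - c * X 1 := by
  have h₀ : substXZero 0 q * X 1 + substXZero 0 r * X 2 = 0 := by
    simpa using congrArg (substXZero 0) h
  obtain ⟨c, hc⟩ : X 2 ∣ substXZero 0 q := by
    rw [X_dvd_iff_substXZero_eq_zero]
    simpa [X_ne_zero] using congrArg (substXZero 2) h₀
  have hr₀ : substXZero 0 r = -(c * X 1) :=
    mul_left_cancel₀ (X_ne_zero 2) (by linear_combination h₀ - X 1 * hc)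
  obtain ⟨a, ha⟩ := X_dvd_sub_substXZero 0 q
  obtain ⟨b, hb⟩ := X_dvd_sub_substXZero 0 r
  have hq₀deg := (totalDegree_substXZero_le 0 q).trans hq
  have hr₀deg := (totalDegree_substXZero_le 0 r).trans hr
  refine ⟨-a, -b, c, ?_, ?_, totalDegree_le_of_X_mul_le (hc ▸ hq₀deg), ?_, ?_, ?_⟩
  · rw [totalDegree_neg]
    exact totalDegree_le_of_X_mul_le (ha ▸ (totalDegree_sub _ _).trans (max_le hq hq₀deg))
  · rw [totalDegree_neg]
    exact totalDegree_le_of_X_mul_le (hb ▸ (totalDegree_sub _ _).trans (max_le hr hr₀deg))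
  · refine mul_left_cancel₀ (X_ne_zero 0) ?_
    linear_combination h - X 1 * ha - X 2 * hb - h₀
  · linear_combination ha + hc
  · linear_combination hb + hr₀

end ThreeVariables

section UnitSphere

noncomputable def unitSpherePoly (R : Type*) [CommRing R] : MvPolynomial (Fin 3) R :=
  X 0 ^ 2 + X 1 ^ 2 + X 2 ^ 2 - 1

@[simp]
theorem constantCoeff_unitSpherePoly : constantCoeff (unitSpherePoly R) = -1 := by
  simp [unitSpherePoly]

theorem totalDegree_unitSpherePoly [Nontrivial R] : (unitSpherePoly R).totalDegree = 2 := by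
  have hhom : (X 0 ^ 2 + X 1 ^ 2 + X 2 ^ 2 : MvPolynomial (Fin 3) R).IsHomogeneous 2 :=
    ((isHomogeneous_X_pow 0 2).add (isHomogeneous_X_pow 1 2)).add (isHomogeneous_X_pow 2 2)
  have hne : (X 0 ^ 2 + X 1 ^ 2 + X 2 ^ 2 : MvPolynomial (Fin 3) R) ≠ 0 := fun h0 => by
    simpa using congrArg (eval (Pi.single 0 1)) h0
  rw [unitSpherePoly, sub_eq_add_neg, totalDegree_add_eq_left_of_totalDegree_lt] <;>
    simp [hhom.totalDegree hne]

theorem constantCoeff_eq_zero_of_eq_mul_unitSpherePoly {s m : MvPolynomial (Fin 3) R}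
    (hs : constantCoeff s = 0) (h : s = m * unitSpherePoly R) : constantCoeff m = 0 := by
  simpa [hs] using congrArg constantCoeff h

theorem totalDegree_le_of_eq_mul_unitSpherePoly [IsDomain R] {n : ℕ}
    {s m : MvPolynomial (Fin 3) R} (hs : s.totalDegree ≤ n + 2) (h : s = m * unitSpherePoly R) :
    m.totalDegree ≤ n := by
  rcases eq_or_ne m 0 with rfl | hm
  · simp
  · have hD : unitSpherePoly R ≠ 0 := fun h0 => by
      simpa [h0] using (totalDegree_unitSpherePoly (R := R))
    rw [h, totalDegree_mul_of_isDomain hm hD, totalDegree_unitSpherePoly] at hs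
    omega

theorem exists_sphere_decomposition [IsDomain R] {p q r f g h : MvPolynomial (Fin 3) R}
    (hq : q.totalDegree ≤ 3) (hr : r.totalDegree ≤ 3)
    (hf : f.totalDegree ≤ 1) (hg : g.totalDegree ≤ 1) (hh : h.totalDegree ≤ 1)
    (hs : p * X 0 + q * X 1 + r * X 2 = (X 0 * f + X 1 * g + X 2 * h) * unitSpherePoly R) :
    ∃ f g h a b c : MvPolynomial (Fin 3) R,
      f.totalDegree ≤ 1 ∧ g.totalDegree ≤ 1 ∧ h.totalDegree ≤ 1 ∧
      a.totalDegree ≤ 2 ∧ b.totalDegree ≤ 2 ∧ c.totalDegree ≤ 2 ∧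
      constantCoeff a = 0 ∧ constantCoeff b = 0 ∧ constantCoeff c = 0 ∧
      p = (1 - (X 0) ^ 2 - (X 1) ^ 2 - (X 2) ^ 2) * f + a * X 1 + b * X 2 ∧
      q = (1 - (X 0) ^ 2 - (X 1) ^ 2 - (X 2) ^ 2) * g - a * X 0 + c * X 2 ∧
      r = (1 - (X 0) ^ 2 - (X 1) ^ 2 - (X 2) ^ 2) * h - b * X 0 - c * X 1 := by
  set D := unitSpherePoly R with hD
  have hD2 : D.totalDegree ≤ 2 := totalDegree_unitSpherePoly.le
  have hDmul {u : MvPolynomial (Fin 3) R} (hu : u.totalDegree ≤ 1) :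
      (D * u).totalDegree ≤ 3 :=
    (totalDegree_mul _ _).trans (by omega)
  obtain ⟨a, b, c, ha, hb, hc, hpa, hqa, hra⟩ :=
    exists_eq_koszul_of_syzygy (p := p - D * f)
    ((totalDegree_sub _ _).trans (max_le hq (hDmul hg)))
    ((totalDegree_sub _ _).trans (max_le hr (hDmul hh))) (by linear_combination hs)
  have hshift {u : MvPolynomial (Fin 3) R} (hu : u.totalDegree ≤ 2) :
      (u + constantCoeff u • D).totalDegree ≤ 2 ∧
        constantCoeff (u + constantCoeff u • D) = 0 :=
    ⟨(totalDegree_add _ _).trans (max_le hu ((totalDegree_smul_le _ _).trans hD2)),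
      by simp [hD]⟩
  have hlin (u : MvPolynomial (Fin 3) R) :
      u ∈ restrictTotalDegree (Fin 3) R 1 ↔ u.totalDegree ≤ 1 :=
    mem_restrictTotalDegree _ _ _
  have hX (t : R) (i : Fin 3) : t • X i ∈ restrictTotalDegree (Fin 3) R 1 :=
    Submodule.smul_mem _ _ ((hlin _).2 (totalDegree_X_le i))
  set a₀ := constantCoeff a
  set b₀ := constantCoeff b
  set c₀ := constantCoeff c
  refine ⟨-f + a₀ • X 1 + b₀ • X 2, -g - a₀ • X 0 + c₀ • X 2,
    -h - b₀ • X 0 - c₀ • X 1, a + a₀ • D, b + b₀ • D, c + c₀ • D,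
    (hlin _).1 (add_mem (add_mem (neg_mem ((hlin f).2 hf)) (hX _ 1)) (hX _ 2)),
    (hlin _).1 (add_mem (sub_mem (neg_mem ((hlin g).2 hg)) (hX _ 0)) (hX _ 2)),
    (hlin _).1 (sub_mem (sub_mem (neg_mem ((hlin h).2 hh)) (hX _ 0)) (hX _ 1)),
    (hshift ha).1, (hshift hb).1, (hshift hc).1, (hshift ha).2, (hshift hb).2, (hshift hc).2,
    ?_, ?_, ?_⟩ <;>
  simp only [hD, unitSpherePoly, smul_eq_C_mul] at hpa hqa hra ⊢
  · linear_combination hpa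
  · linear_combination hqa
  · linear_combination hra

end UnitSphere

end MvPolynomial

theorem stmt_2 (P Q R : MvPolynomial (Fin 3) ℝ)
    (hP3 : P.totalDegree ≤ 3) (hQ3 : Q.totalDegree ≤ 3) (hR3 : R.totalDegree ≤ 3)
    (hinv : ∃ K : MvPolynomial (Fin 3) ℝ,
      2 * (P * X 0 + Q * X 1 + R * X 2) =
        K * ((X 0) ^ 2 + (X 1) ^ 2 + (X 2) ^ 2 - 1)) :
    ∃ f g h A B C : MvPolynomial (Fin 3) ℝ,
      f.totalDegree ≤ 1 ∧ g.totalDegree ≤ 1 ∧ h.totalDegree ≤ 1 ∧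
      A.totalDegree ≤ 2 ∧ B.totalDegree ≤ 2 ∧ C.totalDegree ≤ 2 ∧
      constantCoeff A = 0 ∧ constantCoeff B = 0 ∧ constantCoeff C = 0 ∧
      P = (1 - (X 0) ^ 2 - (X 1) ^ 2 - (X 2) ^ 2) * f + A * X 1 + B * X 2 ∧
      Q = (1 - (X 0) ^ 2 - (X 1) ^ 2 - (X 2) ^ 2) * g - A * X 0 + C * X 2 ∧
      R = (1 - (X 0) ^ 2 - (X 1) ^ 2 - (X 2) ^ 2) * h - B * X 0 - C * X 1 := by
  obtain ⟨K, hK⟩ := hinv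
  obtain ⟨M, rfl⟩ : ∃ M, K = 2 * M :=
    ⟨C 2⁻¹ * K, by rw [← mul_assoc, ← map_ofNat C 2, ← map_mul]; norm_num⟩
  have hS : P * X 0 + Q * X 1 + R * X 2 = M * unitSpherePoly ℝ :=
    mul_left_cancel₀ two_ne_zero (by rw [hK, unitSpherePoly]; ring)
  obtain ⟨f, g, h, hf, hg, hh, rfl⟩ := exists_eq_X_mul_add_X_mul_add_X_mul
    (totalDegree_le_of_eq_mul_unitSpherePoly
      (totalDegree_mul_X_add_mul_X_add_mul_X_le hP3 hQ3 hR3) hS)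
    (constantCoeff_eq_zero_of_eq_mul_unitSpherePoly (by simp) hS)
  exact exists_sphere_decomposition hQ3 hR3 hf hg hh hS
end

section
/- Let X = (P,Q,R) be a cubic Kolmogorov vector field in R³ (i.e., P = xP', Q = yQ', R = zR' with P',Q',R' of degree at most 2) such that the unit sphere x²+y²+z²=1 is invariant (i.e., 2(Px+Qy+Rz) is a polynomial multiple of x²+y²+z²-1). Then there exist real numbers α, β, γ, a, b, c with P = x(α(1-x²-y²-z²)+ay²+bz²), Q = y(β(1-x²-y²-z²)-ax²+cz²), and R = z(γ(1-x²-y²-z²)-bx²-cy²). -/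
open MvPolynomial Finsupp

private lemma fin3sum (m : Fin 3 →₀ ℕ) : (∑ i ∈ m.support, m i) = m 0 + m 1 + m 2 := by
  rw [Finset.sum_subset (Finset.subset_univ _) (by intro i _ hi; simpa using hi)]
  simp [Fin.sum_univ_three]

private lemma quad_form (p : MvPolynomial (Fin 3) ℝ) (h : p.totalDegree ≤ 2) :
    ∃ c0 c1 c2 c3 c4 c5 c6 c7 c8 c9 : ℝ,
      p = C c0 + C c1 * X 0 + C c2 * X 1 + C c3 * X 2 + C c4 * X 0 ^ 2 + C c5 * X 1 ^ 2
        + C c6 * X 2 ^ 2 + C c7 * X 0 * X 1 + C c8 * X 0 * X 2 + C c9 * X 1 * X 2 := by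
  refine ⟨coeff 0 p, coeff (single 0 1) p, coeff (single 1 1) p, coeff (single 2 1) p,
    coeff (single 0 2) p, coeff (single 1 2) p, coeff (single 2 2) p,
    coeff (single 0 1 + single 1 1) p, coeff (single 0 1 + single 2 1) p,
    coeff (single 1 1 + single 2 1) p, ?_⟩
  have hc : ∀ a : ℝ, (C a : MvPolynomial (Fin 3) ℝ) = monomial 0 a := fun a => C_apply
  have hmX : ∀ (s : Fin 3 →₀ ℕ) (n : Fin 3) (a : ℝ),
      monomial s a * X n = monomial (s + single n 1) a := by
    intro s n a; rw [← pow_one (X n : MvPolynomial (Fin 3) ℝ), ← monomial_add_single]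
  simp only [C_mul_X_pow_eq_monomial, C_mul_X_eq_monomial, hmX]
  simp only [hc]
  apply MvPolynomial.ext
  intro m
  simp only [coeff_add, coeff_monomial]
  by_cases hbig : 2 < m 0 + m 1 + m 2
  · have hz : coeff m p = 0 := by
      apply coeff_eq_zero_of_totalDegree_lt
      rw [fin3sum]; omega
    have key : ∀ e : Fin 3 →₀ ℕ, e 0 + e 1 + e 2 ≤ 2 → ¬(e = m) := by
      intro e he hem; subst hem; omega
    rw [hz, if_neg (key _ (by simp)), if_neg (key _ (by simp [single_apply])),
      if_neg (key _ (by simp [single_apply])), if_neg (key _ (by simp [single_apply])),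
      if_neg (key _ (by simp [single_apply])), if_neg (key _ (by simp [single_apply])),
      if_neg (key _ (by simp [single_apply])), if_neg (key _ (by simp [single_apply])),
      if_neg (key _ (by simp [single_apply])), if_neg (key _ (by simp [single_apply]))]
    norm_num
  · push_neg at hbig
    have hm : m = single 0 (m 0) + single 1 (m 1) + single 2 (m 2) := by
      ext i; fin_cases i <;> simp [Finsupp.single_apply]
    have h0 : m 0 ≤ 2 := by omega
    have h1 : m 1 ≤ 2 := by omega
    have h2 : m 2 ≤ 2 := by omega
    rw [hm]
    interval_cases hh0 : (m 0) <;> interval_cases hh1 : (m 1) <;> interval_cases hh2 : (m 2) <;>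
      first
        | omega
        | (norm_num
           [Finsupp.ext_iff, Fin.forall_fin_succ, Finsupp.add_apply, Finsupp.single_apply, Fin.ext_iff, -Fin.val_eq_zero_iff])

set_option maxHeartbeats 4000000 in
theorem stmt_4 (P Q R P' Q' R' : MvPolynomial (Fin 3) ℝ)
    (hP'deg : P'.totalDegree ≤ 2) (hQ'deg : Q'.totalDegree ≤ 2) (hR'deg : R'.totalDegree ≤ 2)
    (hP : P = X 0 * P') (hQ : Q = X 1 * Q') (hR : R = X 2 * R')
    (hinv : ((X 0) ^ 2 + (X 1) ^ 2 + (X 2) ^ 2 - 1 : MvPolynomial (Fin 3) ℝ) ∣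
      2 * (P * X 0 + Q * X 1 + R * X 2)) :
    ∃ α β γ a b c : ℝ,
      P = X 0 * (C α * (1 - (X 0) ^ 2 - (X 1) ^ 2 - (X 2) ^ 2)
        + C a * (X 1) ^ 2 + C b * (X 2) ^ 2) ∧
      Q = X 1 * (C β * (1 - (X 0) ^ 2 - (X 1) ^ 2 - (X 2) ^ 2)
        - C a * (X 0) ^ 2 + C c * (X 2) ^ 2) ∧
      R = X 2 * (C γ * (1 - (X 0) ^ 2 - (X 1) ^ 2 - (X 2) ^ 2)
        - C b * (X 0) ^ 2 - C c * (X 1) ^ 2) := by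
  obtain ⟨p0,p1,p2,p3,p4,p5,p6,p7,p8,p9,hP'⟩ := quad_form P' hP'deg
  obtain ⟨q0,q1,q2,q3,q4,q5,q6,q7,q8,q9,hQ'⟩ := quad_form Q' hQ'deg
  obtain ⟨r0,r1,r2,r3,r4,r5,r6,r7,r8,r9,hR'⟩ := quad_form R' hR'deg
  obtain ⟨K, hK⟩ := hinv
  rw [hP, hQ, hR, hP', hQ', hR'] at hK
  have master : ∀ x y z : ℝ, x^2+y^2+z^2 = 1 →
      2*(x^2*(p0 + p1*x + p2*y + p3*z + p4*x^2 + p5*y^2 + p6*z^2 + p7*(x*y) + p8*(x*z) + p9*(y*z))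
        + y^2*(q0 + q1*x + q2*y + q3*z + q4*x^2 + q5*y^2 + q6*z^2 + q7*(x*y) + q8*(x*z) + q9*(y*z))
        + z^2*(r0 + r1*x + r2*y + r3*z + r4*x^2 + r5*y^2 + r6*z^2 + r7*(x*y) + r8*(x*z) + r9*(y*z))) = 0 := by
    intro x y z hv
    have e := congrArg (eval ![x,y,z]) hK
    simp only [map_mul, map_add, map_sub, map_pow, map_one, map_ofNat, eval_X, eval_C,
      Matrix.cons_val_zero, Matrix.cons_val_one, Matrix.head_cons, Matrix.cons_val_two,
      Matrix.tail_cons] at e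
    linear_combination e + eval ![x,y,z] K * hv
  have h0 : (2 : ℝ) * p0 + (2 : ℝ) * p1 + (2 : ℝ) * p4 = 0 := by
    linear_combination master (1) (0) (0) (by norm_num)
  have h1 : (2 : ℝ) * q0 + (2 : ℝ) * q2 + (2 : ℝ) * q5 = 0 := by
    linear_combination master (0) (1) (0) (by norm_num)
  have h2 : (2 : ℝ) * r0 + (2 : ℝ) * r3 + (2 : ℝ) * r6 = 0 := by
    linear_combination master (0) (0) (1) (by norm_num)
  have h3 : (2 : ℝ) * p0 + (-2 : ℝ) * p1 + (2 : ℝ) * p4 = 0 := by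
    linear_combination master (-1) (0) (0) (by norm_num)
  have h4 : (2 : ℝ) * q0 + (-2 : ℝ) * q2 + (2 : ℝ) * q5 = 0 := by
    linear_combination master (0) (-1) (0) (by norm_num)
  have h5 : (2 : ℝ) * r0 + (-2 : ℝ) * r3 + (2 : ℝ) * r6 = 0 := by
    linear_combination master (0) (0) (-1) (by norm_num)
  have h6 : (18/25 : ℝ) * p0 + (54/125 : ℝ) * p1 + (72/125 : ℝ) * p2 + (162/625 : ℝ) * p4 + (288/625 : ℝ) * p5 + (216/625 : ℝ) * p7 + (32/25 : ℝ) * q0 + (96/125 : ℝ) * q1 + (128/125 : ℝ) * q2 + (288/625 : ℝ) * q4 + (512/625 : ℝ) * q5 + (384/625 : ℝ) * q7 = 0 := by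
    linear_combination master (3/5) (4/5) (0) (by norm_num)
  have h7 : (18/25 : ℝ) * p0 + (54/125 : ℝ) * p1 + (72/125 : ℝ) * p3 + (162/625 : ℝ) * p4 + (288/625 : ℝ) * p6 + (216/625 : ℝ) * p8 + (32/25 : ℝ) * r0 + (96/125 : ℝ) * r1 + (128/125 : ℝ) * r3 + (288/625 : ℝ) * r4 + (512/625 : ℝ) * r6 + (384/625 : ℝ) * r8 = 0 := by
    linear_combination master (3/5) (0) (4/5) (by norm_num)
  have h8 : (18/25 : ℝ) * q0 + (54/125 : ℝ) * q2 + (72/125 : ℝ) * q3 + (162/625 : ℝ) * q5 + (288/625 : ℝ) * q6 + (216/625 : ℝ) * q9 + (32/25 : ℝ) * r0 + (96/125 : ℝ) * r2 + (128/125 : ℝ) * r3 + (288/625 : ℝ) * r5 + (512/625 : ℝ) * r6 + (384/625 : ℝ) * r9 = 0 := by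
    linear_combination master (0) (3/5) (4/5) (by norm_num)
  have h9 : (18/25 : ℝ) * p0 + (54/125 : ℝ) * p1 + (-72/125 : ℝ) * p2 + (162/625 : ℝ) * p4 + (288/625 : ℝ) * p5 + (-216/625 : ℝ) * p7 + (32/25 : ℝ) * q0 + (96/125 : ℝ) * q1 + (-128/125 : ℝ) * q2 + (288/625 : ℝ) * q4 + (512/625 : ℝ) * q5 + (-384/625 : ℝ) * q7 = 0 := by
    linear_combination master (3/5) (-4/5) (0) (by norm_num)
  have h10 : (18/25 : ℝ) * p0 + (54/125 : ℝ) * p1 + (-72/125 : ℝ) * p3 + (162/625 : ℝ) * p4 + (288/625 : ℝ) * p6 + (-216/625 : ℝ) * p8 + (32/25 : ℝ) * r0 + (96/125 : ℝ) * r1 + (-128/125 : ℝ) * r3 + (288/625 : ℝ) * r4 + (512/625 : ℝ) * r6 + (-384/625 : ℝ) * r8 = 0 := by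
    linear_combination master (3/5) (0) (-4/5) (by norm_num)
  have h11 : (18/25 : ℝ) * q0 + (54/125 : ℝ) * q2 + (-72/125 : ℝ) * q3 + (162/625 : ℝ) * q5 + (288/625 : ℝ) * q6 + (-216/625 : ℝ) * q9 + (32/25 : ℝ) * r0 + (96/125 : ℝ) * r2 + (-128/125 : ℝ) * r3 + (288/625 : ℝ) * r5 + (512/625 : ℝ) * r6 + (-384/625 : ℝ) * r9 = 0 := by
    linear_combination master (0) (3/5) (-4/5) (by norm_num)
  have h12 : (18/25 : ℝ) * p0 + (-54/125 : ℝ) * p1 + (72/125 : ℝ) * p2 + (162/625 : ℝ) * p4 + (288/625 : ℝ) * p5 + (-216/625 : ℝ) * p7 + (32/25 : ℝ) * q0 + (-96/125 : ℝ) * q1 + (128/125 : ℝ) * q2 + (288/625 : ℝ) * q4 + (512/625 : ℝ) * q5 + (-384/625 : ℝ) * q7 = 0 := by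
    linear_combination master (-3/5) (4/5) (0) (by norm_num)
  have h13 : (18/25 : ℝ) * p0 + (-54/125 : ℝ) * p1 + (72/125 : ℝ) * p3 + (162/625 : ℝ) * p4 + (288/625 : ℝ) * p6 + (-216/625 : ℝ) * p8 + (32/25 : ℝ) * r0 + (-96/125 : ℝ) * r1 + (128/125 : ℝ) * r3 + (288/625 : ℝ) * r4 + (512/625 : ℝ) * r6 + (-384/625 : ℝ) * r8 = 0 := by
    linear_combination master (-3/5) (0) (4/5) (by norm_num)
  have h14 : (18/25 : ℝ) * q0 + (-54/125 : ℝ) * q2 + (72/125 : ℝ) * q3 + (162/625 : ℝ) * q5 + (288/625 : ℝ) * q6 + (-216/625 : ℝ) * q9 + (32/25 : ℝ) * r0 + (-96/125 : ℝ) * r2 + (128/125 : ℝ) * r3 + (288/625 : ℝ) * r5 + (512/625 : ℝ) * r6 + (-384/625 : ℝ) * r9 = 0 := by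
    linear_combination master (0) (-3/5) (4/5) (by norm_num)
  have h15 : (18/25 : ℝ) * p0 + (-54/125 : ℝ) * p1 + (-72/125 : ℝ) * p2 + (162/625 : ℝ) * p4 + (288/625 : ℝ) * p5 + (216/625 : ℝ) * p7 + (32/25 : ℝ) * q0 + (-96/125 : ℝ) * q1 + (-128/125 : ℝ) * q2 + (288/625 : ℝ) * q4 + (512/625 : ℝ) * q5 + (384/625 : ℝ) * q7 = 0 := by
    linear_combination master (-3/5) (-4/5) (0) (by norm_num)
  have h16 : (18/25 : ℝ) * p0 + (-54/125 : ℝ) * p1 + (-72/125 : ℝ) * p3 + (162/625 : ℝ) * p4 + (288/625 : ℝ) * p6 + (216/625 : ℝ) * p8 + (32/25 : ℝ) * r0 + (-96/125 : ℝ) * r1 + (-128/125 : ℝ) * r3 + (288/625 : ℝ) * r4 + (512/625 : ℝ) * r6 + (384/625 : ℝ) * r8 = 0 := by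
    linear_combination master (-3/5) (0) (-4/5) (by norm_num)
  have h17 : (18/25 : ℝ) * q0 + (-54/125 : ℝ) * q2 + (-72/125 : ℝ) * q3 + (162/625 : ℝ) * q5 + (288/625 : ℝ) * q6 + (216/625 : ℝ) * q9 + (32/25 : ℝ) * r0 + (-96/125 : ℝ) * r2 + (-128/125 : ℝ) * r3 + (288/625 : ℝ) * r5 + (512/625 : ℝ) * r6 + (384/625 : ℝ) * r9 = 0 := by
    linear_combination master (0) (-3/5) (-4/5) (by norm_num)
  have h18 : (32/25 : ℝ) * p0 + (128/125 : ℝ) * p1 + (96/125 : ℝ) * p2 + (512/625 : ℝ) * p4 + (288/625 : ℝ) * p5 + (384/625 : ℝ) * p7 + (18/25 : ℝ) * q0 + (72/125 : ℝ) * q1 + (54/125 : ℝ) * q2 + (288/625 : ℝ) * q4 + (162/625 : ℝ) * q5 + (216/625 : ℝ) * q7 = 0 := by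
    linear_combination master (4/5) (3/5) (0) (by norm_num)
  have h19 : (32/25 : ℝ) * p0 + (128/125 : ℝ) * p1 + (96/125 : ℝ) * p3 + (512/625 : ℝ) * p4 + (288/625 : ℝ) * p6 + (384/625 : ℝ) * p8 + (18/25 : ℝ) * r0 + (72/125 : ℝ) * r1 + (54/125 : ℝ) * r3 + (288/625 : ℝ) * r4 + (162/625 : ℝ) * r6 + (216/625 : ℝ) * r8 = 0 := by
    linear_combination master (4/5) (0) (3/5) (by norm_num)
  have h20 : (32/25 : ℝ) * q0 + (128/125 : ℝ) * q2 + (96/125 : ℝ) * q3 + (512/625 : ℝ) * q5 + (288/625 : ℝ) * q6 + (384/625 : ℝ) * q9 + (18/25 : ℝ) * r0 + (72/125 : ℝ) * r2 + (54/125 : ℝ) * r3 + (288/625 : ℝ) * r5 + (162/625 : ℝ) * r6 + (216/625 : ℝ) * r9 = 0 := by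
    linear_combination master (0) (4/5) (3/5) (by norm_num)
  have h21 : (32/25 : ℝ) * p0 + (128/125 : ℝ) * p1 + (-96/125 : ℝ) * p2 + (512/625 : ℝ) * p4 + (288/625 : ℝ) * p5 + (-384/625 : ℝ) * p7 + (18/25 : ℝ) * q0 + (72/125 : ℝ) * q1 + (-54/125 : ℝ) * q2 + (288/625 : ℝ) * q4 + (162/625 : ℝ) * q5 + (-216/625 : ℝ) * q7 = 0 := by
    linear_combination master (4/5) (-3/5) (0) (by norm_num)
  have h22 : (32/25 : ℝ) * p0 + (128/125 : ℝ) * p1 + (-96/125 : ℝ) * p3 + (512/625 : ℝ) * p4 + (288/625 : ℝ) * p6 + (-384/625 : ℝ) * p8 + (18/25 : ℝ) * r0 + (72/125 : ℝ) * r1 + (-54/125 : ℝ) * r3 + (288/625 : ℝ) * r4 + (162/625 : ℝ) * r6 + (-216/625 : ℝ) * r8 = 0 := by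
    linear_combination master (4/5) (0) (-3/5) (by norm_num)
  have h23 : (32/25 : ℝ) * q0 + (128/125 : ℝ) * q2 + (-96/125 : ℝ) * q3 + (512/625 : ℝ) * q5 + (288/625 : ℝ) * q6 + (-384/625 : ℝ) * q9 + (18/25 : ℝ) * r0 + (72/125 : ℝ) * r2 + (-54/125 : ℝ) * r3 + (288/625 : ℝ) * r5 + (162/625 : ℝ) * r6 + (-216/625 : ℝ) * r9 = 0 := by
    linear_combination master (0) (4/5) (-3/5) (by norm_num)
  have h24 : (32/25 : ℝ) * p0 + (-128/125 : ℝ) * p1 + (96/125 : ℝ) * p2 + (512/625 : ℝ) * p4 + (288/625 : ℝ) * p5 + (-384/625 : ℝ) * p7 + (18/25 : ℝ) * q0 + (-72/125 : ℝ) * q1 + (54/125 : ℝ) * q2 + (288/625 : ℝ) * q4 + (162/625 : ℝ) * q5 + (-216/625 : ℝ) * q7 = 0 := by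
    linear_combination master (-4/5) (3/5) (0) (by norm_num)
  have h25 : (32/25 : ℝ) * p0 + (-128/125 : ℝ) * p1 + (96/125 : ℝ) * p3 + (512/625 : ℝ) * p4 + (288/625 : ℝ) * p6 + (-384/625 : ℝ) * p8 + (18/25 : ℝ) * r0 + (-72/125 : ℝ) * r1 + (54/125 : ℝ) * r3 + (288/625 : ℝ) * r4 + (162/625 : ℝ) * r6 + (-216/625 : ℝ) * r8 = 0 := by
    linear_combination master (-4/5) (0) (3/5) (by norm_num)
  have h26 : (32/25 : ℝ) * q0 + (-128/125 : ℝ) * q2 + (96/125 : ℝ) * q3 + (512/625 : ℝ) * q5 + (288/625 : ℝ) * q6 + (-384/625 : ℝ) * q9 + (18/25 : ℝ) * r0 + (-72/125 : ℝ) * r2 + (54/125 : ℝ) * r3 + (288/625 : ℝ) * r5 + (162/625 : ℝ) * r6 + (-216/625 : ℝ) * r9 = 0 := by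
    linear_combination master (0) (-4/5) (3/5) (by norm_num)
  have h27 : (32/25 : ℝ) * p0 + (-128/125 : ℝ) * p1 + (-96/125 : ℝ) * p2 + (512/625 : ℝ) * p4 + (288/625 : ℝ) * p5 + (384/625 : ℝ) * p7 + (18/25 : ℝ) * q0 + (-72/125 : ℝ) * q1 + (-54/125 : ℝ) * q2 + (288/625 : ℝ) * q4 + (162/625 : ℝ) * q5 + (216/625 : ℝ) * q7 = 0 := by
    linear_combination master (-4/5) (-3/5) (0) (by norm_num)
  have h28 : (32/25 : ℝ) * p0 + (-128/125 : ℝ) * p1 + (-96/125 : ℝ) * p3 + (512/625 : ℝ) * p4 + (288/625 : ℝ) * p6 + (384/625 : ℝ) * p8 + (18/25 : ℝ) * r0 + (-72/125 : ℝ) * r1 + (-54/125 : ℝ) * r3 + (288/625 : ℝ) * r4 + (162/625 : ℝ) * r6 + (216/625 : ℝ) * r8 = 0 := by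
    linear_combination master (-4/5) (0) (-3/5) (by norm_num)
  have h29 : (32/25 : ℝ) * q0 + (-128/125 : ℝ) * q2 + (-96/125 : ℝ) * q3 + (512/625 : ℝ) * q5 + (288/625 : ℝ) * q6 + (384/625 : ℝ) * q9 + (18/25 : ℝ) * r0 + (-72/125 : ℝ) * r2 + (-54/125 : ℝ) * r3 + (288/625 : ℝ) * r5 + (162/625 : ℝ) * r6 + (216/625 : ℝ) * r9 = 0 := by
    linear_combination master (0) (-4/5) (-3/5) (by norm_num)
  have h30 : (2/9 : ℝ) * p0 + (2/27 : ℝ) * p1 + (4/27 : ℝ) * p2 + (4/27 : ℝ) * p3 + (2/81 : ℝ) * p4 + (8/81 : ℝ) * p5 + (8/81 : ℝ) * p6 + (4/81 : ℝ) * p7 + (4/81 : ℝ) * p8 + (8/81 : ℝ) * p9 + (8/9 : ℝ) * q0 + (8/27 : ℝ) * q1 + (16/27 : ℝ) * q2 + (16/27 : ℝ) * q3 + (8/81 : ℝ) * q4 + (32/81 : ℝ) * q5 + (32/81 : ℝ) * q6 + (16/81 : ℝ) * q7 + (16/81 : ℝ) * q8 + (32/81 : ℝ) * q9 + (8/9 :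 ℝ) * r0 + (8/27 : ℝ) * r1 + (16/27 : ℝ) * r2 + (16/27 : ℝ) * r3 + (8/81 : ℝ) * r4 + (32/81 : ℝ) * r5 + (32/81 : ℝ) * r6 + (16/81 : ℝ) * r7 + (16/81 : ℝ) * r8 + (32/81 : ℝ) * r9 = 0 := by
    linear_combination master (1/3) (2/3) (2/3) (by norm_num)
  have h31 : (2/9 : ℝ) * p0 + (2/27 : ℝ) * p1 + (4/27 : ℝ) * p2 + (-4/27 : ℝ) * p3 + (2/81 : ℝ) * p4 + (8/81 : ℝ) * p5 + (8/81 : ℝ) * p6 + (4/81 : ℝ) * p7 + (-4/81 : ℝ) * p8 + (-8/81 : ℝ) * p9 + (8/9 : ℝ) * q0 + (8/27 : ℝ) * q1 + (16/27 : ℝ) * q2 + (-16/27 : ℝ) * q3 + (8/81 : ℝ) * q4 + (32/81 : ℝ) * q5 + (32/81 : ℝ) * q6 + (16/81 : ℝ) * q7 + (-16/81 : ℝ) * q8 + (-32/81 : ℝ) * q9 + (8/9 : ℝ) * r0 + (8/27 : ℝ) * r1 + (16/27 : ℝ) * r2 + (-16/27 : ℝ) * r3 + (8/81 : ℝ) *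 r4 + (32/81 : ℝ) * r5 + (32/81 : ℝ) * r6 + (16/81 : ℝ) * r7 + (-16/81 : ℝ) * r8 + (-32/81 : ℝ) * r9 = 0 := by
    linear_combination master (1/3) (2/3) (-2/3) (by norm_num)
  have h32 : (2/9 : ℝ) * p0 + (2/27 : ℝ) * p1 + (-4/27 : ℝ) * p2 + (4/27 : ℝ) * p3 + (2/81 : ℝ) * p4 + (8/81 : ℝ) * p5 + (8/81 : ℝ) * p6 + (-4/81 : ℝ) * p7 + (4/81 : ℝ) * p8 + (-8/81 : ℝ) * p9 + (8/9 : ℝ) * q0 + (8/27 : ℝ) * q1 + (-16/27 : ℝ) * q2 + (16/27 : ℝ) * q3 + (8/81 : ℝ) * q4 + (32/81 : ℝ) * q5 + (32/81 : ℝ) * q6 + (-16/81 : ℝ) * q7 + (16/81 : ℝ) * q8 + (-32/81 : ℝ) * q9 + (8/9 : ℝ) * r0 + (8/27 : ℝ) * r1 + (-16/27 : ℝ) * r2 + (16/27 : ℝ) * r3 + (8/81 : ℝ) * r4 + (32/81 : ℝ) * r5 + (32/81 : ℝ) * r6 + (-16/81 : ℝ) * r7 + (16/81 : ℝ) * r8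 + (-32/81 : ℝ) * r9 = 0 := by
    linear_combination master (1/3) (-2/3) (2/3) (by norm_num)
  have h33 : (2/9 : ℝ) * p0 + (2/27 : ℝ) * p1 + (-4/27 : ℝ) * p2 + (-4/27 : ℝ) * p3 + (2/81 : ℝ) * p4 + (8/81 : ℝ) * p5 + (8/81 : ℝ) * p6 + (-4/81 : ℝ) * p7 + (-4/81 : ℝ) * p8 + (8/81 : ℝ) * p9 + (8/9 : ℝ) * q0 + (8/27 : ℝ) * q1 + (-16/27 : ℝ) * q2 + (-16/27 : ℝ) * q3 + (8/81 : ℝ) * q4 + (32/81 : ℝ) * q5 + (32/81 : ℝ) * q6 + (-16/81 : ℝ) * q7 + (-16/81 : ℝ) * q8 + (32/81 : ℝ) * q9 + (8/9 : ℝ) * r0 + (8/27 : ℝ) * r1 + (-16/27 : ℝ) * r2 + (-16/27 : ℝ) * r3 + (8/81 : ℝ) * r4 + (32/81 : ℝ) * r5 + (32/81 : ℝ) * r6 + (-16/81 : ℝ) * r7 + (-16/81 : ℝ) * r8 + (32/81 : ℝ) * r9 = 0 := by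
    linear_combination master (1/3) (-2/3) (-2/3) (by norm_num)
  have h34 : (2/9 : ℝ) * p0 + (-2/27 : ℝ) * p1 + (4/27 : ℝ) * p2 + (4/27 : ℝ) * p3 + (2/81 : ℝ) * p4 + (8/81 : ℝ) * p5 + (8/81 : ℝ) * p6 + (-4/81 : ℝ) * p7 + (-4/81 : ℝ) * p8 + (8/81 : ℝ) * p9 + (8/9 : ℝ) * q0 + (-8/27 : ℝ) * q1 + (16/27 : ℝ) * q2 + (16/27 : ℝ) * q3 + (8/81 : ℝ) * q4 + (32/81 : ℝ) * q5 + (32/81 : ℝ) * q6 + (-16/81 : ℝ) * q7 + (-16/81 : ℝ) * q8 + (32/81 : ℝ) * q9 + (8/9 : ℝ) * r0 + (-8/27 : ℝ) * r1 + (16/27 : ℝ) * r2 + (16/27 : ℝ) * r3 + (8/81 : ℝ) * r4 + (32/81 : ℝ) * r5 + (32/81 : ℝ) * r6 + (-16/81 : ℝ) * r7 + (-16/81 : ℝ) * r8 + (32/81 : ℝ) * r9 = 0 := by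
    linear_combination master (-1/3) (2/3) (2/3) (by norm_num)
  have h35 : (2/9 : ℝ) * p0 + (-2/27 : ℝ) * p1 + (4/27 : ℝ) * p2 + (-4/27 : ℝ) * p3 + (2/81 : ℝ) * p4 + (8/81 : ℝ) * p5 + (8/81 : ℝ) * p6 + (-4/81 : ℝ) * p7 + (4/81 : ℝ) * p8 + (-8/81 : ℝ) * p9 + (8/9 : ℝ) * q0 + (-8/27 : ℝ) * q1 + (16/27 : ℝ) * q2 + (-16/27 : ℝ) * q3 + (8/81 : ℝ) * q4 + (32/81 : ℝ) * q5 + (32/81 : ℝ) * q6 + (-16/81 : ℝ) * q7 + (16/81 : ℝ) * q8 + (-32/81 : ℝ) * q9 + (8/9 : ℝ) * r0 + (-8/27 : ℝ) * r1 + (16/27 : ℝ) * r2 + (-16/27 : ℝ) * r3 + (8/81 : ℝ) * r4 + (32/81 : ℝ) * r5 + (32/81 : ℝ) * r6 + (-16/81 : ℝ) * r7 + (16/81 : ℝ) * r8 + (-32/81 : ℝ) * r9 = 0 := by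
    linear_combination master (-1/3) (2/3) (-2/3) (by norm_num)
  have h36 : (2/9 : ℝ) * p0 + (-2/27 : ℝ) * p1 + (-4/27 : ℝ) * p2 + (4/27 : ℝ) * p3 + (2/81 : ℝ) * p4 + (8/81 : ℝ) * p5 + (8/81 : ℝ) * p6 + (4/81 : ℝ) * p7 + (-4/81 : ℝ) * p8 + (-8/81 : ℝ) * p9 + (8/9 : ℝ) * q0 + (-8/27 : ℝ) * q1 + (-16/27 : ℝ) * q2 + (16/27 : ℝ) * q3 + (8/81 : ℝ) * q4 + (32/81 : ℝ) * q5 + (32/81 : ℝ) * q6 + (16/81 : ℝ) * q7 + (-16/81 : ℝ) * q8 + (-32/81 : ℝ) * q9 + (8/9 : ℝ) * r0 + (-8/27 : ℝ) * r1 + (-16/27 : ℝ) * r2 + (16/27 : ℝ) * r3 + (8/81 : ℝ) * r4 + (32/81 : ℝ) * r5 + (32/81 : ℝ) * r6 + (16/81 : ℝ) * r7 + (-16/81 : ℝ) * r8 + (-32/81 : ℝ) * r9 = 0 := by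
    linear_combination master (-1/3) (-2/3) (2/3) (by norm_num)
  have h37 : (2/9 : ℝ) * p0 + (-2/27 : ℝ) * p1 + (-4/27 : ℝ) * p2 + (-4/27 : ℝ) * p3 + (2/81 : ℝ) * p4 + (8/81 : ℝ) * p5 + (8/81 : ℝ) * p6 + (4/81 : ℝ) * p7 + (4/81 : ℝ) * p8 + (8/81 : ℝ) * p9 + (8/9 : ℝ) * q0 + (-8/27 : ℝ) * q1 + (-16/27 : ℝ) * q2 + (-16/27 : ℝ) * q3 + (8/81 : ℝ) * q4 + (32/81 : ℝ) * q5 + (32/81 : ℝ) * q6 + (16/81 : ℝ) * q7 + (16/81 : ℝ) * q8 + (32/81 : ℝ) * q9 + (8/9 : ℝ) * r0 + (-8/27 : ℝ) * r1 + (-16/27 : ℝ) * r2 + (-16/27 : ℝ) * r3 + (8/81 : ℝ) * r4 + (32/81 : ℝ) * r5 + (32/81 : ℝ) * r6 + (16/81 : ℝ) * r7 + (16/81 : ℝ) * r8 + (32/81 : ℝ) * r9 = 0 := by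
    linear_combination master (-1/3) (-2/3) (-2/3) (by norm_num)
  have h38 : (8/9 : ℝ) * p0 + (16/27 : ℝ) * p1 + (16/27 : ℝ) * p2 + (8/27 : ℝ) * p3 + (32/81 : ℝ) * p4 + (32/81 : ℝ) * p5 + (8/81 : ℝ) * p6 + (32/81 : ℝ) * p7 + (16/81 : ℝ) * p8 + (16/81 : ℝ) * p9 + (8/9 : ℝ) * q0 + (16/27 : ℝ) * q1 + (16/27 : ℝ) * q2 + (8/27 : ℝ) * q3 + (32/81 : ℝ) * q4 + (32/81 : ℝ) * q5 + (8/81 : ℝ) * q6 + (32/81 : ℝ) * q7 + (16/81 : ℝ) * q8 + (16/81 : ℝ) * q9 + (2/9 : ℝ) * r0 + (4/27 : ℝ) * r1 + (4/27 : ℝ) * r2 + (2/27 : ℝ) * r3 + (8/81 : ℝ) * r4 + (8/81 : ℝ) * r5 + (2/81 : ℝ) * r6 + (8/81 : ℝ) * r7 + (4/81 : ℝ) * r8 + (4/81 : ℝ) * r9 = 0 := by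
    linear_combination master (2/3) (2/3) (1/3) (by norm_num)
  have h39 : (8/9 : ℝ) * p0 + (16/27 : ℝ) * p1 + (16/27 : ℝ) * p2 + (-8/27 : ℝ) * p3 + (32/81 : ℝ) * p4 + (32/81 : ℝ) * p5 + (8/81 : ℝ) * p6 + (32/81 : ℝ) * p7 + (-16/81 : ℝ) * p8 + (-16/81 : ℝ) * p9 + (8/9 : ℝ) * q0 + (16/27 : ℝ) * q1 + (16/27 : ℝ) * q2 + (-8/27 : ℝ) * q3 + (32/81 : ℝ) * q4 + (32/81 : ℝ) * q5 + (8/81 : ℝ) * q6 + (32/81 : ℝ) * q7 + (-16/81 : ℝ) * q8 + (-16/81 : ℝ) * q9 + (2/9 : ℝ) * r0 + (4/27 : ℝ) * r1 + (4/27 : ℝ) * r2 + (-2/27 : ℝ) * r3 + (8/81 : ℝ) * r4 + (8/81 : ℝ) * r5 + (2/81 : ℝ) * r6 + (8/81 : ℝ) * r7 + (-4/81 : ℝ) * r8 + (-4/81 : ℝ) * r9 = 0 := by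
    linear_combination master (2/3) (2/3) (-1/3) (by norm_num)
  have h40 : (8/9 : ℝ) * p0 + (16/27 : ℝ) * p1 + (-16/27 : ℝ) * p2 + (8/27 : ℝ) * p3 + (32/81 : ℝ) * p4 + (32/81 : ℝ) * p5 + (8/81 : ℝ) * p6 + (-32/81 : ℝ) * p7 + (16/81 : ℝ) * p8 + (-16/81 : ℝ) * p9 + (8/9 : ℝ) * q0 + (16/27 : ℝ) * q1 + (-16/27 : ℝ) * q2 + (8/27 : ℝ) * q3 + (32/81 : ℝ) * q4 + (32/81 : ℝ) * q5 + (8/81 : ℝ) * q6 + (-32/81 : ℝ) * q7 + (16/81 : ℝ) * q8 + (-16/81 : ℝ) * q9 + (2/9 : ℝ) * r0 + (4/27 : ℝ) * r1 + (-4/27 : ℝ) * r2 + (2/27 : ℝ) * r3 + (8/81 : ℝ) * r4 + (8/81 : ℝ) * r5 + (2/81 : ℝ) * r6 + (-8/81 : ℝ) * r7 + (4/81 : ℝ) * r8 + (-4/81 : ℝ) * r9 = 0 := by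
    linear_combination master (2/3) (-2/3) (1/3) (by norm_num)
  have h41 : (8/9 : ℝ) * p0 + (16/27 : ℝ) * p1 + (-16/27 : ℝ) * p2 + (-8/27 : ℝ) * p3 + (32/81 : ℝ) * p4 + (32/81 : ℝ) * p5 + (8/81 : ℝ) * p6 + (-32/81 : ℝ) * p7 + (-16/81 : ℝ) * p8 + (16/81 : ℝ) * p9 + (8/9 : ℝ) * q0 + (16/27 : ℝ) * q1 + (-16/27 : ℝ) * q2 + (-8/27 : ℝ) * q3 + (32/81 : ℝ) * q4 + (32/81 : ℝ) * q5 + (8/81 : ℝ) * q6 + (-32/81 : ℝ) * q7 + (-16/81 : ℝ) * q8 + (16/81 : ℝ) * q9 + (2/9 : ℝ) * r0 + (4/27 : ℝ) * r1 + (-4/27 : ℝ) * r2 + (-2/27 : ℝ) * r3 + (8/81 : ℝ) * r4 + (8/81 : ℝ) * r5 + (2/81 : ℝ) * r6 + (-8/81 : ℝ) * r7 + (-4/81 : ℝ) * r8 + (4/81 : ℝ) * r9 = 0 := by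
    linear_combination master (2/3) (-2/3) (-1/3) (by norm_num)
  have h42 : (8/9 : ℝ) * p0 + (-16/27 : ℝ) * p1 + (16/27 : ℝ) * p2 + (8/27 : ℝ) * p3 + (32/81 : ℝ) * p4 + (32/81 : ℝ) * p5 + (8/81 : ℝ) * p6 + (-32/81 : ℝ) * p7 + (-16/81 : ℝ) * p8 + (16/81 : ℝ) * p9 + (8/9 : ℝ) * q0 + (-16/27 : ℝ) * q1 + (16/27 : ℝ) * q2 + (8/27 : ℝ) * q3 + (32/81 : ℝ) * q4 + (32/81 : ℝ) * q5 + (8/81 : ℝ) * q6 + (-32/81 : ℝ) * q7 + (-16/81 : ℝ) * q8 + (16/81 : ℝ) * q9 + (2/9 : ℝ) * r0 + (-4/27 : ℝ) * r1 + (4/27 : ℝ) * r2 + (2/27 : ℝ) * r3 + (8/81 : ℝ) * r4 + (8/81 : ℝ) * r5 + (2/81 : ℝ) * r6 + (-8/81 : ℝ) * r7 + (-4/81 : ℝ) * r8 + (4/81 : ℝ) * r9 = 0 := by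
    linear_combination master (-2/3) (2/3) (1/3) (by norm_num)
  have h43 : (8/9 : ℝ) * p0 + (-16/27 : ℝ) * p1 + (16/27 : ℝ) * p2 + (-8/27 : ℝ) * p3 + (32/81 : ℝ) * p4 + (32/81 : ℝ) * p5 + (8/81 : ℝ) * p6 + (-32/81 : ℝ) * p7 + (16/81 : ℝ) * p8 + (-16/81 : ℝ) * p9 + (8/9 : ℝ) * q0 + (-16/27 : ℝ) * q1 + (16/27 : ℝ) * q2 + (-8/27 : ℝ) * q3 + (32/81 : ℝ) * q4 + (32/81 : ℝ) * q5 + (8/81 : ℝ) * q6 + (-32/81 : ℝ) * q7 + (16/81 : ℝ) * q8 + (-16/81 : ℝ) * q9 + (2/9 : ℝ) * r0 + (-4/27 : ℝ) * r1 + (4/27 : ℝ) * r2 + (-2/27 : ℝ) * r3 + (8/81 : ℝ) * r4 + (8/81 : ℝ) * r5 + (2/81 : ℝ) * r6 + (-8/81 : ℝ) * r7 + (4/81 : ℝ) * r8 + (-4/81 : ℝ) * r9 = 0 := by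
    linear_combination master (-2/3) (2/3) (-1/3) (by norm_num)
  have h44 : (8/9 : ℝ) * p0 + (-16/27 : ℝ) * p1 + (-16/27 : ℝ) * p2 + (8/27 : ℝ) * p3 + (32/81 : ℝ) * p4 + (32/81 : ℝ) * p5 + (8/81 : ℝ) * p6 + (32/81 : ℝ) * p7 + (-16/81 : ℝ) * p8 + (-16/81 : ℝ) * p9 + (8/9 : ℝ) * q0 + (-16/27 : ℝ) * q1 + (-16/27 : ℝ) * q2 + (8/27 : ℝ) * q3 + (32/81 : ℝ) * q4 + (32/81 : ℝ) * q5 + (8/81 : ℝ) * q6 + (32/81 : ℝ) * q7 + (-16/81 : ℝ) * q8 + (-16/81 : ℝ) * q9 + (2/9 : ℝ) * r0 + (-4/27 : ℝ) * r1 + (-4/27 : ℝ) * r2 + (2/27 : ℝ) * r3 + (8/81 : ℝ) * r4 + (8/81 : ℝ) * r5 + (2/81 : ℝ) * r6 + (8/81 : ℝ) * r7 + (-4/81 : ℝ) * r8 + (-4/81 : ℝ) * r9 = 0 := by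
    linear_combination master (-2/3) (-2/3) (1/3) (by norm_num)
  have h45 : (8/9 : ℝ) * p0 + (-16/27 : ℝ) * p1 + (-16/27 : ℝ) * p2 + (-8/27 : ℝ) * p3 + (32/81 : ℝ) * p4 + (32/81 : ℝ) * p5 + (8/81 : ℝ) * p6 + (32/81 : ℝ) * p7 + (16/81 : ℝ) * p8 + (16/81 : ℝ) * p9 + (8/9 : ℝ) * q0 + (-16/27 : ℝ) * q1 + (-16/27 : ℝ) * q2 + (-8/27 : ℝ) * q3 + (32/81 : ℝ) * q4 + (32/81 : ℝ) * q5 + (8/81 : ℝ) * q6 + (32/81 : ℝ) * q7 + (16/81 : ℝ) * q8 + (16/81 : ℝ) * q9 + (2/9 : ℝ) * r0 + (-4/27 : ℝ) * r1 + (-4/27 : ℝ) * r2 + (-2/27 : ℝ) * r3 + (8/81 : ℝ) * r4 + (8/81 : ℝ) * r5 + (2/81 : ℝ) * r6 + (8/81 : ℝ) * r7 + (4/81 : ℝ) * r8 + (4/81 : ℝ) * r9 = 0 := by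
    linear_combination master (-2/3) (-2/3) (-1/3) (by norm_num)
  have h46 : (8/9 : ℝ) * p0 + (16/27 : ℝ) * p1 + (8/27 : ℝ) * p2 + (16/27 : ℝ) * p3 + (32/81 : ℝ) * p4 + (8/81 : ℝ) * p5 + (32/81 : ℝ) * p6 + (16/81 : ℝ) * p7 + (32/81 : ℝ) * p8 + (16/81 : ℝ) * p9 + (2/9 : ℝ) * q0 + (4/27 : ℝ) * q1 + (2/27 : ℝ) * q2 + (4/27 : ℝ) * q3 + (8/81 : ℝ) * q4 + (2/81 : ℝ) * q5 + (8/81 : ℝ) * q6 + (4/81 : ℝ) * q7 + (8/81 : ℝ) * q8 + (4/81 : ℝ) * q9 + (8/9 : ℝ) * r0 + (16/27 : ℝ) * r1 + (8/27 : ℝ) * r2 + (16/27 : ℝ) * r3 + (32/81 : ℝ) * r4 + (8/81 : ℝ) * r5 + (32/81 : ℝ) * r6 + (16/81 : ℝ) * r7 + (32/81 : ℝ) * r8 + (16/81 : ℝ) * r9 = 0 := by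
    linear_combination master (2/3) (1/3) (2/3) (by norm_num)
  have h47 : (8/9 : ℝ) * p0 + (16/27 : ℝ) * p1 + (8/27 : ℝ) * p2 + (-16/27 : ℝ) * p3 + (32/81 : ℝ) * p4 + (8/81 : ℝ) * p5 + (32/81 : ℝ) * p6 + (16/81 : ℝ) * p7 + (-32/81 : ℝ) * p8 + (-16/81 : ℝ) * p9 + (2/9 : ℝ) * q0 + (4/27 : ℝ) * q1 + (2/27 : ℝ) * q2 + (-4/27 : ℝ) * q3 + (8/81 : ℝ) * q4 + (2/81 : ℝ) * q5 + (8/81 : ℝ) * q6 + (4/81 : ℝ) * q7 + (-8/81 : ℝ) * q8 + (-4/81 : ℝ) * q9 + (8/9 : ℝ) * r0 + (16/27 : ℝ) * r1 + (8/27 : ℝ) * r2 + (-16/27 : ℝ) * r3 + (32/81 : ℝ) * r4 + (8/81 : ℝ) * r5 + (32/81 : ℝ) * r6 + (16/81 : ℝ) * r7 + (-32/81 : ℝ) * r8 + (-16/81 : ℝ) * r9 = 0 := by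
    linear_combination master (2/3) (1/3) (-2/3) (by norm_num)
  have h48 : (8/9 : ℝ) * p0 + (16/27 : ℝ) * p1 + (-8/27 : ℝ) * p2 + (16/27 : ℝ) * p3 + (32/81 : ℝ) * p4 + (8/81 : ℝ) * p5 + (32/81 : ℝ) * p6 + (-16/81 : ℝ) * p7 + (32/81 : ℝ) * p8 + (-16/81 : ℝ) * p9 + (2/9 : ℝ) * q0 + (4/27 : ℝ) * q1 + (-2/27 : ℝ) * q2 + (4/27 : ℝ) * q3 + (8/81 : ℝ) * q4 + (2/81 : ℝ) * q5 + (8/81 : ℝ) * q6 + (-4/81 : ℝ) * q7 + (8/81 : ℝ) * q8 + (-4/81 : ℝ) * q9 + (8/9 : ℝ) * r0 + (16/27 : ℝ) * r1 + (-8/27 : ℝ) * r2 + (16/27 : ℝ) * r3 + (32/81 : ℝ) * r4 + (8/81 : ℝ) * r5 + (32/81 : ℝ) * r6 + (-16/81 : ℝ) * r7 + (32/81 : ℝ) * r8 + (-16/81 : ℝ) * r9 = 0 := by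
    linear_combination master (2/3) (-1/3) (2/3) (by norm_num)
  have h49 : (8/9 : ℝ) * p0 + (16/27 : ℝ) * p1 + (-8/27 : ℝ) * p2 + (-16/27 : ℝ) * p3 + (32/81 : ℝ) * p4 + (8/81 : ℝ) * p5 + (32/81 : ℝ) * p6 + (-16/81 : ℝ) * p7 + (-32/81 : ℝ) * p8 + (16/81 : ℝ) * p9 + (2/9 : ℝ) * q0 + (4/27 : ℝ) * q1 + (-2/27 : ℝ) * q2 + (-4/27 : ℝ) * q3 + (8/81 : ℝ) * q4 + (2/81 : ℝ) * q5 + (8/81 : ℝ) * q6 + (-4/81 : ℝ) * q7 + (-8/81 : ℝ) * q8 + (4/81 : ℝ) * q9 + (8/9 : ℝ) * r0 + (16/27 : ℝ) * r1 + (-8/27 : ℝ) * r2 + (-16/27 : ℝ) * r3 + (32/81 : ℝ) * r4 + (8/81 : ℝ) * r5 + (32/81 : ℝ) * r6 + (-16/81 : ℝ) * r7 + (-32/81 : ℝ) * r8 + (16/81 : ℝ) * r9 = 0 := by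
    linear_combination master (2/3) (-1/3) (-2/3) (by norm_num)
  have h50 : (8/9 : ℝ) * p0 + (-16/27 : ℝ) * p1 + (8/27 : ℝ) * p2 + (16/27 : ℝ) * p3 + (32/81 : ℝ) * p4 + (8/81 : ℝ) * p5 + (32/81 : ℝ) * p6 + (-16/81 : ℝ) * p7 + (-32/81 : ℝ) * p8 + (16/81 : ℝ) * p9 + (2/9 : ℝ) * q0 + (-4/27 : ℝ) * q1 + (2/27 : ℝ) * q2 + (4/27 : ℝ) * q3 + (8/81 : ℝ) * q4 + (2/81 : ℝ) * q5 + (8/81 : ℝ) * q6 + (-4/81 : ℝ) * q7 + (-8/81 : ℝ) * q8 + (4/81 : ℝ) * q9 + (8/9 : ℝ) * r0 + (-16/27 : ℝ) * r1 + (8/27 : ℝ) * r2 + (16/27 : ℝ) * r3 + (32/81 : ℝ) * r4 + (8/81 : ℝ) * r5 + (32/81 : ℝ) * r6 + (-16/81 : ℝ) * r7 + (-32/81 : ℝ) * r8 + (16/81 : ℝ) * r9 = 0 := by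
    linear_combination master (-2/3) (1/3) (2/3) (by norm_num)
  have h51 : (8/9 : ℝ) * p0 + (-16/27 : ℝ) * p1 + (8/27 : ℝ) * p2 + (-16/27 : ℝ) * p3 + (32/81 : ℝ) * p4 + (8/81 : ℝ) * p5 + (32/81 : ℝ) * p6 + (-16/81 : ℝ) * p7 + (32/81 : ℝ) * p8 + (-16/81 : ℝ) * p9 + (2/9 : ℝ) * q0 + (-4/27 : ℝ) * q1 + (2/27 : ℝ) * q2 + (-4/27 : ℝ) * q3 + (8/81 : ℝ) * q4 + (2/81 : ℝ) * q5 + (8/81 : ℝ) * q6 + (-4/81 : ℝ) * q7 + (8/81 : ℝ) * q8 + (-4/81 : ℝ) * q9 + (8/9 : ℝ) * r0 + (-16/27 : ℝ) * r1 + (8/27 : ℝ) * r2 + (-16/27 : ℝ) * r3 + (32/81 : ℝ) * r4 + (8/81 : ℝ) * r5 + (32/81 : ℝ) * r6 + (-16/81 : ℝ) * r7 + (32/81 : ℝ) * r8 + (-16/81 : ℝ) * r9 = 0 := by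
    linear_combination master (-2/3) (1/3) (-2/3) (by norm_num)
  have h52 : (8/9 : ℝ) * p0 + (-16/27 : ℝ) * p1 + (-8/27 : ℝ) * p2 + (16/27 : ℝ) * p3 + (32/81 : ℝ) * p4 + (8/81 : ℝ) * p5 + (32/81 : ℝ) * p6 + (16/81 : ℝ) * p7 + (-32/81 : ℝ) * p8 + (-16/81 : ℝ) * p9 + (2/9 : ℝ) * q0 + (-4/27 : ℝ) * q1 + (-2/27 : ℝ) * q2 + (4/27 : ℝ) * q3 + (8/81 : ℝ) * q4 + (2/81 : ℝ) * q5 + (8/81 : ℝ) * q6 + (4/81 : ℝ) * q7 + (-8/81 : ℝ) * q8 + (-4/81 : ℝ) * q9 + (8/9 : ℝ) * r0 + (-16/27 : ℝ) * r1 + (-8/27 : ℝ) * r2 + (16/27 : ℝ) * r3 + (32/81 : ℝ) * r4 + (8/81 : ℝ) * r5 + (32/81 : ℝ) * r6 + (16/81 : ℝ) * r7 + (-32/81 : ℝ) * r8 + (-16/81 : ℝ) * r9 = 0 := by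
    linear_combination master (-2/3) (-1/3) (2/3) (by norm_num)
  have h53 : (8/9 : ℝ) * p0 + (-16/27 : ℝ) * p1 + (-8/27 : ℝ) * p2 + (-16/27 : ℝ) * p3 + (32/81 : ℝ) * p4 + (8/81 : ℝ) * p5 + (32/81 : ℝ) * p6 + (16/81 : ℝ) * p7 + (32/81 : ℝ) * p8 + (16/81 : ℝ) * p9 + (2/9 : ℝ) * q0 + (-4/27 : ℝ) * q1 + (-2/27 : ℝ) * q2 + (-4/27 : ℝ) * q3 + (8/81 : ℝ) * q4 + (2/81 : ℝ) * q5 + (8/81 : ℝ) * q6 + (4/81 : ℝ) * q7 + (8/81 : ℝ) * q8 + (4/81 : ℝ) * q9 + (8/9 : ℝ) * r0 + (-16/27 : ℝ) * r1 + (-8/27 : ℝ) * r2 + (-16/27 : ℝ) * r3 + (32/81 : ℝ) * r4 + (8/81 : ℝ) * r5 + (32/81 : ℝ) * r6 + (16/81 : ℝ) * r7 + (32/81 : ℝ) * r8 + (16/81 : ℝ) * r9 = 0 := by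
    linear_combination master (-2/3) (-1/3) (-2/3) (by norm_num)
  have ep1 : p1 = 0 := by linear_combination (1/4 : ℝ) * h0 + (-1/4 : ℝ) * h3
  have ep2 : p2 = 0 := by linear_combination (-4/9 : ℝ) * h1 + (4/9 : ℝ) * h4 + (125/288 : ℝ) * h6 + (-125/288 : ℝ) * h9 + (125/288 : ℝ) * h12 + (-125/288 : ℝ) * h15
  have ep3 : p3 = 0 := by linear_combination (-4/9 : ℝ) * h2 + (4/9 : ℝ) * h5 + (125/288 : ℝ) * h7 + (-125/288 : ℝ) * h10 + (125/288 : ℝ) * h13 + (-125/288 : ℝ) * h16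
  have ep7 : p7 = 0 := by linear_combination (-3/4 : ℝ) * h0 + (8/9 : ℝ) * h1 + (1/12 : ℝ) * h3 + (-2/9 : ℝ) * h4 + (-625/288 : ℝ) * h6 + (25/288 : ℝ) * h9 + (-175/288 : ℝ) * h12 + (625/2016 : ℝ) * h15 + (50/21 : ℝ) * h18
  have ep8 : p8 = 0 := by linear_combination (-3/4 : ℝ) * h0 + (8/9 : ℝ) * h2 + (1/12 : ℝ) * h3 + (-2/9 : ℝ) * h5 + (-625/288 : ℝ) * h7 + (25/288 : ℝ) * h10 + (-175/288 : ℝ) * h13 + (625/2016 : ℝ) * h16 + (50/21 : ℝ) * h19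
  have ep9 : p9 = 0 := by linear_combination (-7/8 : ℝ) * h0 + (47/36 : ℝ) * h1 + (-25/9 : ℝ) * h2 + (7/16 : ℝ) * h3 + (-11/72 : ℝ) * h4 + (-5/6 : ℝ) * h5 + (875/576 : ℝ) * h6 + (875/576 : ℝ) * h7 + (625/144 : ℝ) * h8 + (875/576 : ℝ) * h9 + (875/576 : ℝ) * h10 + (175/48 : ℝ) * h11 + (-125/288 : ℝ) * h12 + (-125/288 : ℝ) * h13 + (175/36 : ℝ) * h14 + (-125/288 : ℝ) * h15 + (-125/288 : ℝ) * h16 + (-25/6 : ℝ) * h20 + (-81/16 : ℝ) * h31 + (-81/16 : ℝ) * h32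
  have ep04 : p0 + p4 = 0 := by linear_combination (1/4 : ℝ) * h0 + (1/4 : ℝ) * h3
  have eq1 : q1 = 0 := by linear_combination (-9/64 : ℝ) * h0 + (9/64 : ℝ) * h3 + (125/384 : ℝ) * h6 + (125/384 : ℝ) * h9 + (-125/384 : ℝ) * h12 + (-125/384 : ℝ) * h15
  have eq2 : q2 = 0 := by linear_combination (1/4 : ℝ) * h1 + (-1/4 : ℝ) * h4
  have eq3 : q3 = 0 := by linear_combination (-4/9 : ℝ) * h2 + (4/9 : ℝ) * h5 + (125/288 : ℝ) * h8 + (-125/288 : ℝ) * h11 + (125/288 : ℝ) * h14 + (-125/288 : ℝ) * h17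
  have eq7 : q7 = 0 := by linear_combination (27/64 : ℝ) * h0 + (-1/2 : ℝ) * h1 + (-3/64 : ℝ) * h3 + (1/8 : ℝ) * h4 + (625/384 : ℝ) * h6 + (-175/384 : ℝ) * h9 + (-25/384 : ℝ) * h12 + (625/2688 : ℝ) * h15 + (-75/56 : ℝ) * h18
  have eq8 : q8 = 0 := by linear_combination (13/64 : ℝ) * h0 + (1/288 : ℝ) * h1 + (65/36 : ℝ) * h2 + (-37/192 : ℝ) * h3 + (1/288 : ℝ) * h4 + (-3/8 : ℝ) * h5 + (-875/1152 : ℝ) * h6 + (-625/288 : ℝ) * h7 + (-1375/576 : ℝ) * h8 + (-875/1152 : ℝ) * h9 + (125/576 : ℝ) * h11 + (125/576 : ℝ) * h12 + (125/1152 : ℝ) * h13 + (-1375/576 : ℝ) * h14 + (125/576 : ℝ) * h15 + (625/2688 : ℝ) * h16 + (125/576 : ℝ) * h17 + (125/168 : ℝ) * h19 + (81/32 : ℝ) * h30 + (81/32 : ℝ) * h32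
  have eq9 : q9 = 0 := by linear_combination (-3/4 : ℝ) * h1 + (8/9 : ℝ) * h2 + (1/12 : ℝ) * h4 + (-2/9 : ℝ) * h5 + (-625/288 : ℝ) * h8 + (25/288 : ℝ) * h11 + (-175/288 : ℝ) * h14 + (625/2016 : ℝ) * h17 + (50/21 : ℝ) * h20
  have eq05 : q0 + q5 = 0 := by linear_combination (1/4 : ℝ) * h1 + (1/4 : ℝ) * h4
  have er1 : r1 = 0 := by linear_combination (-9/64 : ℝ) * h0 + (9/64 : ℝ) * h3 + (125/384 : ℝ) * h7 + (125/384 : ℝ) * h10 + (-125/384 : ℝ) * h13 + (-125/384 : ℝ) * h16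
  have er2 : r2 = 0 := by linear_combination (-9/64 : ℝ) * h1 + (9/64 : ℝ) * h4 + (125/384 : ℝ) * h8 + (125/384 : ℝ) * h11 + (-125/384 : ℝ) * h14 + (-125/384 : ℝ) * h17
  have er3 : r3 = 0 := by linear_combination (1/4 : ℝ) * h2 + (-1/4 : ℝ) * h5
  have er7 : r7 = 0 := by linear_combination (13/64 : ℝ) * h0 + (55/192 : ℝ) * h1 + (11/18 : ℝ) * h2 + (-37/192 : ℝ) * h3 + (-41/576 : ℝ) * h4 + (11/18 : ℝ) * h5 + (-625/288 : ℝ) * h6 + (-875/1152 : ℝ) * h7 + (-2375/1152 : ℝ) * h8 + (-875/1152 : ℝ) * h10 + (-2375/1152 : ℝ) * h11 + (125/1152 : ℝ) * h12 + (125/576 : ℝ) * h13 + (-125/1152 : ℝ) * h14 + (625/2688 : ℝ) * h15 + (125/576 : ℝ) * h16 + (-125/1152 : ℝ) * h17 + (125/168 : ℝ) * h18 + (81/32 : ℝ) * h30 + (81/32 : ℝ) * h31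
  have er8 : r8 = 0 := by linear_combination (27/64 : ℝ) * h0 + (-1/2 : ℝ) * h2 + (-3/64 : ℝ) * h3 + (1/8 : ℝ) * h5 + (625/384 : ℝ) * h7 + (-175/384 : ℝ) * h10 + (-25/384 : ℝ) * h13 + (625/2688 : ℝ) * h16 + (-75/56 : ℝ) * h19
  have er9 : r9 = 0 := by linear_combination (27/64 : ℝ) * h1 + (-1/2 : ℝ) * h2 + (-3/64 : ℝ) * h4 + (1/8 : ℝ) * h5 + (625/384 : ℝ) * h8 + (-175/384 : ℝ) * h11 + (-25/384 : ℝ) * h14 + (625/2688 : ℝ) * h17 + (-75/56 : ℝ) * h20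
  have er06 : r0 + r6 = 0 := by linear_combination (1/4 : ℝ) * h2 + (1/4 : ℝ) * h5
  have epq : p0 + q0 + p5 + q4 = 0 := by linear_combination (-9/64 : ℝ) * h0 + (-4/9 : ℝ) * h1 + (-9/64 : ℝ) * h3 + (-4/9 : ℝ) * h4 + (625/1152 : ℝ) * h6 + (625/1152 : ℝ) * h9 + (625/1152 : ℝ) * h12 + (625/1152 : ℝ) * h15
  have epr : p0 + r0 + p6 + r4 = 0 := by linear_combination (-9/64 : ℝ) * h0 + (-4/9 : ℝ) * h2 + (-9/64 : ℝ) * h3 + (-4/9 : ℝ) * h5 + (625/1152 : ℝ) * h7 + (625/1152 : ℝ) * h10 + (625/1152 : ℝ) * h13 + (625/1152 : ℝ) * h16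
  have eqr : q0 + r0 + q6 + r5 = 0 := by linear_combination (-9/64 : ℝ) * h1 + (-4/9 : ℝ) * h2 + (-9/64 : ℝ) * h4 + (-4/9 : ℝ) * h5 + (625/1152 : ℝ) * h8 + (625/1152 : ℝ) * h11 + (625/1152 : ℝ) * h14 + (625/1152 : ℝ) * h17
  refine ⟨p0, q0, r0, p5 + p0, p6 + p0, q6 + q0, ?_, ?_, ?_⟩
  · rw [hP, hP', show p4 = -p0 by linear_combination ep04,
      show p1 = (0:ℝ) by linear_combination ep1, show p2 = (0:ℝ) by linear_combination ep2,
      show p3 = (0:ℝ) by linear_combination ep3, show p7 = (0:ℝ) by linear_combination ep7,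
      show p8 = (0:ℝ) by linear_combination ep8, show p9 = (0:ℝ) by linear_combination ep9]
    simp only [map_zero, map_neg, map_add]
    ring
  · rw [hQ, hQ', show q5 = -q0 by linear_combination eq05,
      show q4 = -(p5 + p0 + q0) by linear_combination epq,
      show q1 = (0:ℝ) by linear_combination eq1, show q2 = (0:ℝ) by linear_combination eq2,
      show q3 = (0:ℝ) by linear_combination eq3, show q7 = (0:ℝ) by linear_combination eq7,
      show q8 = (0:ℝ) by linear_combination eq8, show q9 = (0:ℝ) by linear_combination eq9]
    simp only [map_zero, map_neg, map_add]
    ring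
  · rw [hR, hR', show r6 = -r0 by linear_combination er06,
      show r4 = -(p6 + p0 + r0) by linear_combination epr,
      show r5 = -(q6 + q0 + r0) by linear_combination eqr,
      show r1 = (0:ℝ) by linear_combination er1, show r2 = (0:ℝ) by linear_combination er2,
      show r3 = (0:ℝ) by linear_combination er3, show r7 = (0:ℝ) by linear_combination er7,
      show r8 = (0:ℝ) by linear_combination er8, show r9 = (0:ℝ) by linear_combination er9]
    simp only [map_zero, map_neg, map_add]
    ring
end

section
/- Let X = (P,Q,R) be a cubic homogeneous vector field with Px+Qy+Rz = 0, and let 0 < d < 1. Suppose the quadric cone g = -d²(x²+y²+z²) + z² satisfies X(g) = K·g for some polynomial K. Then there exist real numbers p, q such that R = (px+qy)(-d²(x²+y²+z²)+z²). -/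
open MvPolynomial

attribute [local instance] MvPolynomial.gradedAlgebra

lemma X_dvd_sub_aeval' {σ : Type*} [DecidableEq σ] {Rg : Type*} [CommRing Rg] (i : σ)
    (φ : MvPolynomial σ Rg) :
    X i ∣ φ - aeval (Function.update X i 0) φ := by
  induction φ using MvPolynomial.induction_on with
  | C a => simp
  | add p q hp hq =>
    have := dvd_add hp hq
    convert this using 1
    simp only [map_add]
    ring
  | mul_X p j hp =>
    by_cases h : j = i
    · subst h
      simp only [map_mul, aeval_X, Function.update_self, mul_zero, sub_zero]
      exact Dvd.dvd.mul_left dvd_rfl p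
    · obtain ⟨c, hc⟩ := hp
      refine ⟨c * X j, ?_⟩
      simp only [map_mul, aeval_X, Function.update_of_ne h]
      linear_combination X j * hc

lemma degree_fin3 (m : Fin 3 →₀ ℕ) : Finsupp.degree m = m 0 + m 1 + m 2 := by
  rw [Finsupp.degree_apply, Finset.sum_subset (Finset.subset_univ _)
    (fun x _ hx => Finsupp.notMem_support_iff.mp hx), Fin.sum_univ_three]

lemma linear_form (L : MvPolynomial (Fin 3) ℝ) (h : L.IsHomogeneous 1) :
    L = C (coeff (Finsupp.single 0 1) L) * X 0 + C (coeff (Finsupp.single 1 1) L) * X 1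
      + C (coeff (Finsupp.single 2 1) L) * X 2 := by
  ext m
  by_cases hm : Finsupp.degree m = 1
  · have h3 : m 0 + m 1 + m 2 = 1 := by rw [← degree_fin3]; exact hm
    have : m = Finsupp.single 0 1 ∨ m = Finsupp.single 1 1 ∨ m = Finsupp.single 2 1 := by
      have : (m 0 = 1 ∧ m 1 = 0 ∧ m 2 = 0) ∨ (m 0 = 0 ∧ m 1 = 1 ∧ m 2 = 0)
          ∨ (m 0 = 0 ∧ m 1 = 0 ∧ m 2 = 1) := by omega
      rcases this with ⟨a, b, c⟩ | ⟨a, b, c⟩ | ⟨a, b, c⟩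
      · exact Or.inl (by ext i; fin_cases i <;> simp [Finsupp.single_apply, a, b, c])
      · exact Or.inr (Or.inl (by ext i; fin_cases i <;> simp [Finsupp.single_apply, a, b, c]))
      · exact Or.inr (Or.inr (by ext i; fin_cases i <;> simp [Finsupp.single_apply, a, b, c]))
    rcases this with rfl | rfl | rfl <;>
      simp [coeff_X', Finsupp.single_eq_single_iff]
  · have hz : coeff m L = 0 := h.coeff_eq_zero hm
    have hne : ∀ j : Fin 3, ¬ (Finsupp.single j 1 = m) := by
      intro j hj
      apply hm
      rw [← hj, degree_fin3]
      fin_cases j <;> simp [Finsupp.single_apply]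
    simp [coeff_X', hne, hz]

set_option maxHeartbeats 2000000 in
theorem stmt_11 (P Q R : MvPolynomial (Fin 3) ℝ)
    (hP : P.IsHomogeneous 3) (hQ : Q.IsHomogeneous 3) (hR : R.IsHomogeneous 3)
    (htang : P * X 0 + Q * X 1 + R * X 2 = 0)
    (d : ℝ) (hd0 : 0 < d) (hd1 : d < 1)
    (g : MvPolynomial (Fin 3) ℝ)
    (hg : g = - C (d ^ 2) * ((X 0) ^ 2 + (X 1) ^ 2 + (X 2) ^ 2) + (X 2) ^ 2)
    (hinv : ∃ K : MvPolynomial (Fin 3) ℝ,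
      P * pderiv 0 g + Q * pderiv 1 g + R * pderiv 2 g = K * g) :
    ∃ p q : ℝ, R = (C p * X 0 + C q * X 1) *
      (- C (d ^ 2) * ((X 0) ^ 2 + (X 1) ^ 2 + (X 2) ^ 2) + (X 2) ^ 2) := by
  obtain ⟨K, hK⟩ := hinv
  -- step 1: K * g = 2 * (R * X 2)
  have h0 : pderiv 0 g = -(C (d^2) * 2) * X 0 := by
    subst hg; simp [pderiv_X, Pi.single_apply]; ring
  have h1 : pderiv 1 g = -(C (d^2) * 2) * X 1 := by
    subst hg; simp [pderiv_X, Pi.single_apply]; ring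
  have h2 : pderiv 2 g = -(C (d^2) * 2) * X 2 + 2 * X 2 := by
    subst hg; simp [pderiv_X, Pi.single_apply]; ring
  rw [h0, h1, h2] at hK
  have key : K * g = 2 * (R * X 2) := by
    linear_combination -hK - (C (d^2) * 2) * htang
  -- step 2: X 2 ∣ K
  set ψ : MvPolynomial (Fin 3) ℝ →ₐ[ℝ] MvPolynomial (Fin 3) ℝ :=
    aeval (Function.update X 2 0) with hψdef
  have hψX2 : ψ (X 2) = 0 := by simp [hψdef]
  have hψg : ψ g = - C (d^2) * ((X 0)^2 + (X 1)^2) := by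
    rw [hg]
    simp [hψdef, aeval_X, Function.update_apply, show (0:Fin 3) ≠ 2 by decide,
      show (1:Fin 3) ≠ 2 by decide]
    try ring
  have hψgne : ψ g ≠ 0 := by
    intro hc
    rw [hψg] at hc
    have := congrArg (eval (fun _ => (1:ℝ))) hc
    simp only [map_neg, map_mul, map_add, map_pow, eval_C, eval_X, map_zero, one_pow] at this
    all_goals nlinarith
  have hψK : ψ K = 0 := by
    have := congrArg ψ key
    rw [map_mul, map_mul, map_mul, hψX2, mul_zero, mul_zero] at this
    rcases mul_eq_zero.mp this with h | h
    · exact h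
    · exact absurd h hψgne
  obtain ⟨K₁, hK₁⟩ : X 2 ∣ K := by
    have := X_dvd_sub_aeval' 2 K
    rwa [← hψdef, hψK, sub_zero] at this
  have key2 : K₁ * g = 2 * R := by
    have hX2 : (X 2 : MvPolynomial (Fin 3) ℝ) ≠ 0 := X_ne_zero _
    apply mul_left_cancel₀ hX2
    rw [hK₁] at key
    linear_combination key
  -- step 3: extract homogeneous component
  have hgh : g.IsHomogeneous 2 := by
    rw [hg]
    have hx : ∀ i : Fin 3, ((X i : MvPolynomial (Fin 3) ℝ)^2).IsHomogeneous 2 := fun i =>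
      (isHomogeneous_X ℝ i).pow 2
    exact ((isHomogeneous_C (Fin 3) (d^2)).neg.mul
      (((hx 0).add (hx 1)).add (hx 2))).add (hx 2)
  have hgmem : g ∈ homogeneousSubmodule (Fin 3) ℝ 2 := (mem_homogeneousSubmodule _ _).mpr hgh
  have hdec : ∀ (φ : MvPolynomial (Fin 3) ℝ) (n : ℕ),
      (DirectSum.decompose (homogeneousSubmodule (Fin 3) ℝ) φ n : MvPolynomial (Fin 3) ℝ)
        = homogeneousComponent n φ := fun φ n => decomposition.decompose'_apply φ n
  set L : MvPolynomial (Fin 3) ℝ := homogeneousComponent 1 K₁ with hLdef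
  have hLg : L * g = 2 * R := by
    have hmul := DirectSum.coe_decompose_mul_of_right_mem_of_le
      (𝒜 := homogeneousSubmodule (Fin 3) ℝ) (a := K₁) hgmem (by norm_num : 2 ≤ 3)
    rw [hdec, hdec, key2] at hmul
    have h2R : (2 * R : MvPolynomial (Fin 3) ℝ).IsHomogeneous 3 := by
      have : ((C 2 : MvPolynomial (Fin 3) ℝ) * R).IsHomogeneous 3 := by
        simpa using (isHomogeneous_C (Fin 3) (2:ℝ)).mul hR
      simpa [map_ofNat] using this
    rw [homogeneousComponent_of_mem ((mem_homogeneousSubmodule _ _).mpr h2R), if_pos rfl]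
      at hmul
    exact hmul.symm
  have hLhom : L.IsHomogeneous 1 := homogeneousComponent_isHomogeneous 1 K₁
  -- step 4: the z-coefficient of L vanishes
  set a := coeff (Finsupp.single 0 1) L with ha
  set b := coeff (Finsupp.single 1 1) L with hb
  set c := coeff (Finsupp.single 2 1) L with hc
  have hLform : L = C a * X 0 + C b * X 1 + C c * X 2 := linear_form L hLhom
  set ev : MvPolynomial (Fin 3) ℝ →ₐ[ℝ] Polynomial ℝ :=
    aeval ![0, 0, Polynomial.X] with hevdef
  have hevR : ev R = 0 := by
    have := congrArg ev htang
    simp only [map_add, map_mul, map_zero, hevdef, aeval_X] at this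
    simp only [Matrix.cons_val_zero, Matrix.cons_val_one, Matrix.head_cons, mul_zero,
      zero_add, Matrix.cons_val_two, Matrix.tail_cons] at this
    rcases mul_eq_zero.mp this with h | h
    · exact h
    · exact absurd h Polynomial.X_ne_zero
  have hevg : ev g = Polynomial.C (1 - d^2) * Polynomial.X ^ 2 := by
    rw [hg, hevdef]
    simp [Matrix.cons_val_zero, Matrix.cons_val_one, Matrix.head_cons]
    ring
  have hc0 : c = 0 := by
    have := congrArg ev hLg
    rw [map_mul, map_mul, hevR, mul_zero, hevg, hLform] at this
    simp only [map_add, map_mul, hevdef, aeval_X, aeval_C] at this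
    simp only [Matrix.cons_val_zero, Matrix.cons_val_one, Matrix.head_cons, mul_zero,
      zero_add, Matrix.cons_val_two, Matrix.tail_cons, add_zero] at this
    -- this : (algebraMap ℝ _ c * Polynomial.X) * (Polynomial.C (1-d^2) * X^2) = 0
    have hne : (Polynomial.C (1 - d^2) : Polynomial ℝ) ≠ 0 := by
      rw [Ne, Polynomial.C_eq_zero]
      nlinarith
    have hX : (Polynomial.X : Polynomial ℝ) ≠ 0 := Polynomial.X_ne_zero
    have : (algebraMap ℝ (Polynomial ℝ) c) = 0 := by
      by_contra hcc
      apply hne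
      have := mul_eq_zero.mp this
      rcases this with h | h
      · rcases mul_eq_zero.mp h with h' | h'
        · exact absurd h' hcc
        · exact absurd h' hX
      · rcases mul_eq_zero.mp h with h' | h'
        · exact h'
        · exact absurd (pow_eq_zero_iff (n := 2) (by norm_num) |>.mp h') hX
    simpa [Polynomial.algebraMap_eq, Polynomial.C_eq_zero] using this
  -- step 5: conclude
  refine ⟨a / 2, b / 2, ?_⟩
  rw [← hg]
  have htwo : (2 : MvPolynomial (Fin 3) ℝ) ≠ 0 := two_ne_zero
  apply mul_left_cancel₀ htwo
  rw [← hLg, hLform, hc0, map_zero, zero_mul, add_zero]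
  have ha2 : (2 : MvPolynomial (Fin 3) ℝ) * C (a/2) = C a := by
    rw [show ((2:MvPolynomial (Fin 3) ℝ)) = C (2:ℝ) from (map_ofNat C 2).symm, ← C_mul,
      show (2:ℝ) * (a/2) = a by ring]
  have hb2 : (2 : MvPolynomial (Fin 3) ℝ) * C (b/2) = C b := by
    rw [show ((2:MvPolynomial (Fin 3) ℝ)) = C (2:ℝ) from (map_ofNat C 2).symm, ← C_mul,
      show (2:ℝ) * (b/2) = b by ring]
  linear_combination (-(X 0 * g)) * ha2 + (-(X 1 * g)) * hb2
end

section
/- Let X = (P,Q,R) with P = Ay+Bz, Q = -Ax+Cz, R = -Bx-Cy where A = x²+y², B = y²+xy, C = -x²-xy. Then X is a homogeneous cubic vector field tangent to the unit sphere, the plane {z=0} is invariant (z divides R), and X has no singular point on the great circle {z=0}∩{x²+y²=1}; hence this great circle is a periodic orbit of X. -/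
/-!
The component `R = -B x - C y` vanishes identically, and on the plane `z = 0` the field reduces to
`(x² + y²) (y, -x, 0)`, which on the unit circle is the rotation field `(y, -x, 0)`: it vanishes
only at the origin.
-/

open MvPolynomial

theorem stmt_12 (A B C P Q R : MvPolynomial (Fin 3) ℝ)
    (hA : A = (X 0) ^ 2 + (X 1) ^ 2) (hB : B = (X 1) ^ 2 + X 0 * X 1)
    (hC : C = -(X 0) ^ 2 - X 0 * X 1)
    (hP : P = A * X 1 + B * X 2) (hQ : Q = -A * X 0 + C * X 2)
    (hR : R = -B * X 0 - C * X 1) :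
    P * X 0 + Q * X 1 + R * X 2 = 0 ∧
    (X 2 : MvPolynomial (Fin 3) ℝ) ∣ R ∧
    ∀ x y : ℝ, x ^ 2 + y ^ 2 = 1 →
      ¬ (eval ![x, y, 0] P = 0 ∧ eval ![x, y, 0] Q = 0 ∧ eval ![x, y, 0] R = 0) := by
  subst hA hB hC hP hQ hR
  have hR_eq_zero : -((X 1) ^ 2 + X 0 * X 1) * X 0 - (-(X 0) ^ 2 - X 0 * X 1) * X 1
      = (0 : MvPolynomial (Fin 3) ℝ) := by ring
  refine ⟨by ring, hR_eq_zero ▸ dvd_zero _, fun x y hcircle ⟨hP0, hQ0, _⟩ => ?_⟩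
  have hy : y = 0 := by simpa [hcircle] using hP0
  have hx : x = 0 := by
    have : -(x ^ 2 + y ^ 2) * x = 0 := by simpa using hQ0
    simpa [hcircle] using this
  simp [hx, hy] at hcircle
end

section
/- Consider the extactic polynomial E = z(-C'(y²+z²) + x(A' - B'y)) where A' is any homogeneous quadratic and B', C' any homogeneous linear polynomials in R[x,y,z] with C' not identically zero on the plane x=0 (i.e., C'(0,y,z) ≠ 0 as a polynomial). Then E cannot be written as a product of four real linear factors each of the form by+cz. -/
/-!
Setting `x = 0` turns `E` into `-z · C'(0, y, z) · (y² + z²)`, which is nonzero. A product of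
real linear forms `b y + c z` that vanishes at the complex point `(0, i, 1)`, a zero of
`y² + z²`, must have a zero factor (as `b i + c = 0` forces `b = c = 0`), so it is the zero
polynomial; hence `E` is not such a product.
-/

open MvPolynomial

lemma sq_add_sq_X_ne_zero {σ : Type*} (j k : σ) : (X j ^ 2 + X k ^ 2 : MvPolynomial σ ℝ) ≠ 0 := by
  intro h
  have := congrArg (eval fun _ => (1 : ℝ)) h
  norm_num at this

lemma prod_linearForms_eq_zero_of_aeval_eq_zero {σ ι : Type*} {s : Finset ι} (b c : ι → ℝ)
    {j k : σ} {v : σ → ℂ} (hj : v j = Complex.I) (hk : v k = 1)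
    (h : aeval v (∏ i ∈ s, (C (b i) * X j + C (c i) * X k)) = 0) :
    ∏ i ∈ s, (C (b i) * X j + C (c i) * X k : MvPolynomial σ ℝ) = 0 := by
  rw [map_prod] at h
  obtain ⟨i, hi, hzero⟩ := Finset.prod_eq_zero_iff.mp h
  simp only [map_add, map_mul, aeval_C, aeval_X, hj, hk, mul_one] at hzero
  have hb : b i = 0 := by simpa using congrArg Complex.im hzero
  have hc : c i = 0 := by simpa using congrArg Complex.re hzero
  exact Finset.prod_eq_zero hi (by simp [hb, hc])

theorem stmt_13_general (A' B' C' E : MvPolynomial (Fin 3) ℝ)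
    (hC'x : (aeval ![0, X 1, X 2] C' : MvPolynomial (Fin 3) ℝ) ≠ 0)
    (hE : E = X 2 * (-C' * ((X 1) ^ 2 + (X 2) ^ 2) + X 0 * (A' - B' * X 1))) :
    ¬ ∃ b c : Fin 4 → ℝ, E = ∏ i, (C (b i) * X 1 + C (c i) * X 2) := by
  rintro ⟨b, c, hfac⟩
  have hvanish : aeval ![0, Complex.I, 1] E = 0 := by
    simp [hE, Complex.I_sq]
  have hE0 : E = 0 := by
    rw [hfac] at hvanish ⊢
    exact prod_linearForms_eq_zero_of_aeval_eq_zero b c rfl rfl hvanish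
  have hrestrict : aeval ![0, X 1, X 2] E
      = -(X 2 * aeval ![0, X 1, X 2] C' * (X 1 ^ 2 + X 2 ^ 2) : MvPolynomial (Fin 3) ℝ) := by
    simp only [hE, map_mul, map_add, map_neg, map_sub, map_pow, aeval_X, Matrix.cons_val]
    ring
  rw [hE0, map_zero, zero_eq_neg] at hrestrict
  exact mul_ne_zero (mul_ne_zero (X_ne_zero 2) hC'x) (sq_add_sq_X_ne_zero 1 2) hrestrict

theorem stmt_13 (A' B' C' E : MvPolynomial (Fin 3) ℝ)
    (hA' : A'.IsHomogeneous 2) (hB' : B'.IsHomogeneous 1) (hC' : C'.IsHomogeneous 1)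
    (hC'x : (aeval ![0, X 1, X 2] C' : MvPolynomial (Fin 3) ℝ) ≠ 0)
    (hE : E = X 2 * (-C' * ((X 1) ^ 2 + (X 2) ^ 2) + X 0 * (A' - B' * X 1))) :
    ¬ ∃ b c : Fin 4 → ℝ, E = ∏ i, (C (b i) * X 1 + C (c i) * X 2) :=
  stmt_13_general A' B' C' E hC'x hE
end

section
/- Let A, B, C be nonzero real numbers and consider the cubic Kolmogorov vector field on the unit sphere: P = x(Ay²+Bz²), Q = y(-Ax²+Cz²), R = z(-Bx²-Cy²) (taking α=β=γ=0). A point (x,y,z) on the unit sphere with all coordinates nonzero is a singular point of (P,Q,R) if and only if x² = -C/(B-A-C), y² = B/(B-A-C), and z² = -A/(B-A-C). In particular, such singular points exist in R³ if and only if (A > 0, C > 0, B < 0) or (A < 0, C < 0, B > 0). -/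
/-!
On the sphere with `xyz ≠ 0`, singularity is a linear system in `(x², y², z²)` whose matrix is
antisymmetric with kernel spanned by `(C, -B, A)`; since `C ≠ 0` the kernel is exactly that line, so
`(x², y², z²) = t (C, -B, A)` with `t = -1/(B-A-C)` fixed by `x² + y² + z² = 1`. Such a point exists
exactly when these three values are positive, i.e. when `A` and `C` share a sign and `B` has the other.
-/

section Field

variable {K : Type*} [Field K]

theorem kolmogorov_linear_system_iff {A B C u v w : K} (hC : C ≠ 0) (hsum : u + v + w = 1) :
    (A * v + B * w = 0 ∧ -A * u + C * w = 0 ∧ -B * u - C * v = 0) ↔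
      (u = -C / (B - A - C) ∧ v = B / (B - A - C) ∧ w = -A / (B - A - C)) := by
  constructor
  · -- with `C ≠ 0` the system has rank two, so the first equation is redundant
    rintro ⟨-, h₂, h₃⟩
    have hu : u * (B - A - C) = -C := by linear_combination -C * hsum + h₂ - h₃
    have hD : B - A - C ≠ 0 := by
      rintro hD
      exact hC (by simpa [hD] using hu.symm)
    have hv : v * (B - A - C) * C = B * C := by
      linear_combination (-(B - A - C)) * h₃ - B * hu
    have hw : w * (B - A - C) * C = -A * C := by
      linear_combination (B - A - C) * h₂ + A * hu
    refine ⟨?_, ?_, ?_⟩ <;> rw [eq_div_iff hD]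
    exacts [hu, mul_right_cancel₀ hC hv, mul_right_cancel₀ hC hw]
  · rintro ⟨rfl, rfl, rfl⟩
    have hD : B - A - C ≠ 0 := by
      rintro hD
      simp [hD] at hsum
    refine ⟨?_, ?_, ?_⟩ <;> field_simp <;> ring

theorem kolmogorov_singular_iff {A B C x y z : K} (hC : C ≠ 0) (hs : x ^ 2 + y ^ 2 + z ^ 2 = 1)
    (hx : x ≠ 0) (hy : y ≠ 0) (hz : z ≠ 0) :
    (x * (A * y ^ 2 + B * z ^ 2) = 0 ∧ y * (-A * x ^ 2 + C * z ^ 2) = 0 ∧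
        z * (-B * x ^ 2 - C * y ^ 2) = 0) ↔
      (x ^ 2 = -C / (B - A - C) ∧ y ^ 2 = B / (B - A - C) ∧ z ^ 2 = -A / (B - A - C)) := by
  simpa only [mul_eq_zero, hx, hy, hz, false_or] using kolmogorov_linear_system_iff hC hs

end Field

theorem kolmogorov_coordinates_pos_iff {A B C : ℝ} :
    (0 < -C / (B - A - C) ∧ 0 < B / (B - A - C) ∧ 0 < -A / (B - A - C)) ↔
      ((A > 0 ∧ C > 0 ∧ B < 0) ∨ (A < 0 ∧ C < 0 ∧ B > 0)) := by
  rcases lt_trichotomy (B - A - C) 0 with hD | hD | hD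
  · have hsign (a : ℝ) : 0 < a / (B - A - C) ↔ a < 0 := by
      rw [← neg_div_neg_eq, div_pos_iff_of_pos_right (neg_pos.2 hD), neg_pos]
    simp only [hsign]
    constructor
    · rintro ⟨hC, hB, hA⟩
      exact Or.inl ⟨by linarith, by linarith, hB⟩
    · rintro (⟨hA, hC, hB⟩ | ⟨hA, hC, hB⟩)
      · exact ⟨by linarith, hB, by linarith⟩
      · linarith
  · simp only [hD, div_zero, lt_irrefl, false_and, false_iff]
    rintro (⟨hA, hC, hB⟩ | ⟨hA, hC, hB⟩) <;> linarith
  · simp only [div_pos_iff_of_pos_right hD]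
    constructor
    · rintro ⟨hC, hB, hA⟩
      exact Or.inr ⟨by linarith, by linarith, hB⟩
    · rintro (⟨hA, hC, hB⟩ | ⟨hA, hC, hB⟩)
      · linarith
      · exact ⟨by linarith, hB, by linarith⟩

theorem stmt_14_general (A B C : ℝ) (hC : C ≠ 0) :
    (∀ x y z : ℝ, x ^ 2 + y ^ 2 + z ^ 2 = 1 → x ≠ 0 → y ≠ 0 → z ≠ 0 →
      ((x * (A * y ^ 2 + B * z ^ 2) = 0 ∧
        y * (-A * x ^ 2 + C * z ^ 2) = 0 ∧
        z * (-B * x ^ 2 - C * y ^ 2) = 0) ↔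
       (x ^ 2 = -C / (B - A - C) ∧ y ^ 2 = B / (B - A - C) ∧
        z ^ 2 = -A / (B - A - C)))) ∧
    ((∃ x y z : ℝ, x ^ 2 + y ^ 2 + z ^ 2 = 1 ∧ x ≠ 0 ∧ y ≠ 0 ∧ z ≠ 0 ∧
        x * (A * y ^ 2 + B * z ^ 2) = 0 ∧
        y * (-A * x ^ 2 + C * z ^ 2) = 0 ∧
        z * (-B * x ^ 2 - C * y ^ 2) = 0) ↔
     ((A > 0 ∧ C > 0 ∧ B < 0) ∨ (A < 0 ∧ C < 0 ∧ B > 0))) := by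
  have singular_iff (x y z : ℝ) (hs : x ^ 2 + y ^ 2 + z ^ 2 = 1) (hx : x ≠ 0) (hy : y ≠ 0)
      (hz : z ≠ 0) := kolmogorov_singular_iff (A := A) (B := B) hC hs hx hy hz
  refine ⟨singular_iff, ?_⟩
  rw [← kolmogorov_coordinates_pos_iff]
  constructor
  · rintro ⟨x, y, z, hs, hx, hy, hz, hsing⟩
    obtain ⟨hx2, hy2, hz2⟩ := (singular_iff x y z hs hx hy hz).1 hsing
    exact ⟨hx2 ▸ by positivity, hy2 ▸ by positivity, hz2 ▸ by positivity⟩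
  · rintro ⟨hu, hv, hw⟩
    have hs : √(-C / (B - A - C)) ^ 2 + √(B / (B - A - C)) ^ 2 + √(-A / (B - A - C)) ^ 2 = 1 := by
      have hD : B - A - C ≠ 0 := by rintro hD; simp [hD] at hu
      rw [Real.sq_sqrt hu.le, Real.sq_sqrt hv.le, Real.sq_sqrt hw.le]
      field_simp
      ring
    have hx := (Real.sqrt_pos.2 hu).ne'
    have hy := (Real.sqrt_pos.2 hv).ne'
    have hz := (Real.sqrt_pos.2 hw).ne'
    exact ⟨_, _, _, hs, hx, hy, hz, (singular_iff _ _ _ hs hx hy hz).2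
      ⟨Real.sq_sqrt hu.le, Real.sq_sqrt hv.le, Real.sq_sqrt hw.le⟩⟩

theorem stmt_14 (A B C : ℝ) (hA : A ≠ 0) (hB : B ≠ 0) (hC : C ≠ 0) :
    (∀ x y z : ℝ, x ^ 2 + y ^ 2 + z ^ 2 = 1 → x ≠ 0 → y ≠ 0 → z ≠ 0 →
      ((x * (A * y ^ 2 + B * z ^ 2) = 0 ∧
        y * (-A * x ^ 2 + C * z ^ 2) = 0 ∧
        z * (-B * x ^ 2 - C * y ^ 2) = 0) ↔
       (x ^ 2 = -C / (B - A - C) ∧ y ^ 2 = B / (B - A - C) ∧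
        z ^ 2 = -A / (B - A - C)))) ∧
    ((∃ x y z : ℝ, x ^ 2 + y ^ 2 + z ^ 2 = 1 ∧ x ≠ 0 ∧ y ≠ 0 ∧ z ≠ 0 ∧
        x * (A * y ^ 2 + B * z ^ 2) = 0 ∧
        y * (-A * x ^ 2 + C * z ^ 2) = 0 ∧
        z * (-B * x ^ 2 - C * y ^ 2) = 0) ↔
     ((A > 0 ∧ C > 0 ∧ B < 0) ∨ (A < 0 ∧ C < 0 ∧ B > 0))) :=
  stmt_14_general A B C hC
end

section
/- Let A, C > 0 and B < 0 be real numbers, and let D² = B - 2A - C + 2√(-A)·√(B-A-C) (a negative real). Define F = 8A/D² + 2((D²+C-B)/D²)². Then as A → ∞ (with B, C fixed), (C-B)F + 2Pv → -8√(-BC) and (C-B)F - 2Pv → 8√(-BC), where Pv = 16A√(-BC)/D² + 8(C-B)√(-BC)/D² · (D²+C-B)/D². Consequently, for all sufficiently large A the discriminant Δ = ((C-B)F + 2Pv)((C-B)F - 2Pv) is negative. -/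
open Filter Real

theorem stmt_18 (B C : ℝ) (hB : B < 0) (hC : 0 < C)
    (D2 F Pv : ℝ → ℝ)
    (hD2 : ∀ A, D2 A = B - 2 * A - C - 2 * Real.sqrt A * Real.sqrt (A + C - B))
    (hF : ∀ A, F A = 8 * A / D2 A + 2 * ((D2 A + C - B) / D2 A) ^ 2)
    (hPv : ∀ A, Pv A = 16 * A * Real.sqrt (-B * C) / D2 A
        + 8 * (C - B) * Real.sqrt (-B * C) / D2 A * ((D2 A + C - B) / D2 A)) :
    Tendsto (fun A => (C - B) * F A + 2 * Pv A) atTop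
        (nhds (-8 * Real.sqrt (-B * C))) ∧
    Tendsto (fun A => (C - B) * F A - 2 * Pv A) atTop
        (nhds (8 * Real.sqrt (-B * C))) ∧
    ∀ᶠ A in atTop,
      ((C - B) * F A + 2 * Pv A) * ((C - B) * F A - 2 * Pv A) < 0 := by
  set s := Real.sqrt (-B * C) with hs
  have hspos : 0 < s := Real.sqrt_pos.2 (by nlinarith)
  -- eventual positivity facts
  have hev : ∀ᶠ A in (atTop : Filter ℝ), 0 < A ∧ 0 ≤ A + C - B := by
    filter_upwards [eventually_gt_atTop 0] with A hA
    exact ⟨hA, by nlinarith⟩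
  -- (A + C - B)/A → 1
  have h1 : Tendsto (fun A : ℝ => (A + C - B) / A) atTop (nhds 1) := by
    have h0 : Tendsto (fun A : ℝ => 1 + (C - B) * A⁻¹) atTop (nhds (1 + (C - B) * 0)) :=
      tendsto_const_nhds.add (tendsto_inv_atTop_zero.const_mul _)
    rw [mul_zero, add_zero] at h0
    refine h0.congr' ?_
    filter_upwards [eventually_gt_atTop 0] with A hA
    field_simp
    ring
  have h2 : Tendsto (fun A : ℝ => Real.sqrt ((A + C - B) / A)) atTop (nhds 1) := by
    have := (Real.continuous_sqrt.tendsto 1).comp h1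
    rw [Real.sqrt_one] at this
    exact this
  -- D2 A / A → -4
  have hD : Tendsto (fun A : ℝ => D2 A / A) atTop (nhds (-4)) := by
    have h0 : Tendsto (fun A : ℝ => B * A⁻¹ - 2 - C * A⁻¹ - 2 * Real.sqrt ((A + C - B) / A))
        atTop (nhds (B * 0 - 2 - C * 0 - 2 * 1)) :=
      (((tendsto_inv_atTop_zero.const_mul _).sub tendsto_const_nhds).sub
        (tendsto_inv_atTop_zero.const_mul _)).sub (h2.const_mul _)
    have : (B * 0 - 2 - C * 0 - 2 * 1 : ℝ) = -4 := by norm_num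
    rw [this] at h0
    refine h0.congr' ?_
    filter_upwards [hev] with A ⟨hA, hA2⟩
    have hsA : Real.sqrt A ≠ 0 := by positivity
    have hkey : Real.sqrt ((A + C - B) / A) = Real.sqrt (A + C - B) / Real.sqrt A :=
      Real.sqrt_div hA2 A
    rw [hkey, hD2 A]
    have hAA : A = Real.sqrt A * Real.sqrt A := (Real.mul_self_sqrt hA.le).symm
    field_simp
    linear_combination (2 * Real.sqrt (A + C - B)) * (Real.mul_self_sqrt hA.le)
  have hne : ∀ᶠ A in (atTop : Filter ℝ), D2 A < -A ∧ 0 < A := by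
    filter_upwards [hD.eventually (eventually_lt_nhds (show (-4:ℝ) < -1 by norm_num)),
      eventually_gt_atTop 0] with A h hA
    constructor
    · have := (div_lt_iff₀ hA).1 h
      linarith
    · exact hA
  -- A / D2 A → -1/4
  have hAD : Tendsto (fun A : ℝ => A / D2 A) atTop (nhds ((-4 : ℝ)⁻¹)) := by
    have := hD.inv₀ (by norm_num)
    exact this.congr fun A => inv_div _ _
  -- (D2 A)⁻¹ → 0
  have hi : Tendsto (fun A : ℝ => (D2 A)⁻¹) atTop (nhds 0) := by
    have h0 := tendsto_inv_atTop_zero.mul hAD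
    rw [zero_mul] at h0
    refine h0.congr' ?_
    filter_upwards [eventually_gt_atTop 0] with A hA
    field_simp
  -- (D2 A + C - B) / D2 A → 1
  have hR : Tendsto (fun A : ℝ => (D2 A + C - B) / D2 A) atTop (nhds 1) := by
    have h0 : Tendsto (fun A : ℝ => 1 + (C - B) * (D2 A)⁻¹) atTop (nhds (1 + (C - B) * 0)) :=
      tendsto_const_nhds.add (hi.const_mul _)
    rw [mul_zero, add_zero] at h0
    refine h0.congr' ?_
    filter_upwards [hne] with A ⟨h, hA⟩
    have hD2ne : D2 A ≠ 0 := by nlinarith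
    field_simp
    ring
  -- main limits
  have key : ∀ A : ℝ, (C - B) * F A + 2 * Pv A =
      (C - B) * (8 * (A / D2 A) + 2 * ((D2 A + C - B) / D2 A) ^ 2)
        + 2 * (16 * s * (A / D2 A) + 8 * (C - B) * s * (D2 A)⁻¹ * ((D2 A + C - B) / D2 A)) := by
    intro A; rw [hF, hPv]; ring
  have key2 : ∀ A : ℝ, (C - B) * F A - 2 * Pv A =
      (C - B) * (8 * (A / D2 A) + 2 * ((D2 A + C - B) / D2 A) ^ 2)
        - 2 * (16 * s * (A / D2 A) + 8 * (C - B) * s * (D2 A)⁻¹ * ((D2 A + C - B) / D2 A)) := by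
    intro A; rw [hF, hPv]; ring
  have hFlim : Tendsto (fun A : ℝ =>
      (C - B) * (8 * (A / D2 A) + 2 * ((D2 A + C - B) / D2 A) ^ 2)) atTop
      (nhds ((C - B) * (8 * (-4 : ℝ)⁻¹ + 2 * 1 ^ 2))) :=
    (((hAD.const_mul 8).add ((hR.pow 2).const_mul 2)).const_mul _)
  have hPlim : Tendsto (fun A : ℝ =>
      16 * s * (A / D2 A) + 8 * (C - B) * s * (D2 A)⁻¹ * ((D2 A + C - B) / D2 A)) atTop
      (nhds (16 * s * (-4 : ℝ)⁻¹ + 8 * (C - B) * s * 0 * 1)) :=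
    (hAD.const_mul _).add (((hi.const_mul _).mul hR))
  have lim1 : Tendsto (fun A => (C - B) * F A + 2 * Pv A) atTop (nhds (-8 * s)) := by
    have h0 := hFlim.add (hPlim.const_mul 2)
    have : (C - B) * (8 * (-4 : ℝ)⁻¹ + 2 * 1 ^ 2)
        + 2 * (16 * s * (-4 : ℝ)⁻¹ + 8 * (C - B) * s * 0 * 1) = -8 * s := by ring
    rw [this] at h0
    exact h0.congr fun A => (key A).symm
  have lim2 : Tendsto (fun A => (C - B) * F A - 2 * Pv A) atTop (nhds (8 * s)) := by
    have h0 := hFlim.sub (hPlim.const_mul 2)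
    have : (C - B) * (8 * (-4 : ℝ)⁻¹ + 2 * 1 ^ 2)
        - 2 * (16 * s * (-4 : ℝ)⁻¹ + 8 * (C - B) * s * 0 * 1) = 8 * s := by ring
    rw [this] at h0
    exact h0.congr fun A => (key2 A).symm
  refine ⟨lim1, lim2, ?_⟩
  filter_upwards [lim1.eventually (eventually_lt_nhds (show -8 * s < 0 by nlinarith)),
    lim2.eventually (eventually_gt_nhds (show (0:ℝ) < 8 * s by nlinarith))] with A h1 h2
  exact mul_neg_of_neg_of_pos h1 h2
end
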